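/- arXiv:math/0601643 — 11 statements merged into one kernel-verified Lean document; each statement's English description precedes it below -/
import Mathlib

section
/- For every real θ > 0 and every α > 0, the series Σ_{i≥1} θ^i/(i·((i−1)!)^α) converges; moreover, setting w_0 = 0 and w_i = θ^i/(i·((i−1)!)^α) for i ≥ 1, and writing θ = b/c with b, c > 0, one has for every integer i ≥ 1 the stationarity (balance) equation b(i−1)w_{i−1} + c(i+1)i^α w_{i+1} = i(b + c(i−1)^α) w_i. (Thus the normalized weights P(ξ^{(α)} = i) = C θ^i/(i((i−1)!)^α) form a stationary distribution of the α-logistic branching process with birth rate b·i and death rate c·i·(i−1)^α.) -/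
/-!
Since `i! = i (i-1)!`, the weights satisfy `(i+1) i^α w_{i+1} = θ i w_i` for all `i ≥ 0`, which with
`θ = b/c` is detailed balance `b i w_i = c (i+1) i^α w_{i+1}`: the flux from `i` to `i+1` equals the
flux back. Adding the detailed balance relations of the two edges at `i` gives the global balance
equation. The same recurrence gives `‖w_{i+1}‖ i^α ≤ |θ| ‖w_i‖`, and since `i^α → ∞` the ratio test
yields summability.
-/

open Filter

lemma summable_of_norm_succ_mul_rpow_le {E : Type*} [SeminormedAddCommGroup E]
    [CompleteSpace E] {α C : ℝ} (hα : 0 < α) {w : ℕ → E}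
    (h : ∀ᶠ i : ℕ in atTop, ‖w (i + 1)‖ * (i : ℝ) ^ α ≤ C * ‖w i‖) : Summable w := by
  have hpow : Tendsto (fun i : ℕ => (i : ℝ) ^ α) atTop atTop :=
    (tendsto_rpow_atTop hα).comp tendsto_natCast_atTop_atTop
  refine summable_of_ratio_norm_eventually_le (r := 1 / 2) (by norm_num) ?_
  filter_upwards [h, hpow.eventually_ge_atTop (2 * |C| + 1)] with i hi hlarge
  nlinarith [norm_nonneg (w (i + 1)), norm_nonneg (w i), le_abs_self C, abs_nonneg C]

lemma balance_of_detailed_balance {β δ π : ℕ → ℝ}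
    (h : ∀ i, β i * π i = δ (i + 1) * π (i + 1)) (i : ℕ) :
    β i * π i + δ (i + 2) * π (i + 2) = (β (i + 1) + δ (i + 1)) * π (i + 1) := by
  linear_combination h i - h (i + 1)

section LogisticWeights

variable {θ α : ℝ} {w : ℕ → ℝ}
  (hw : ∀ i : ℕ, 1 ≤ i → w i = θ ^ i / ((i : ℝ) * ((Nat.factorial (i - 1) : ℝ) ^ α)))
include hw

lemma logisticWeight_succ_mul (hα : α ≠ 0) (i : ℕ) :
    ((i : ℝ) + 1) * (i : ℝ) ^ α * w (i + 1) = θ * i * w i := by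
  rcases Nat.eq_zero_or_pos i with rfl | hi
  · simp [Real.zero_rpow hα]
  have hi' : (0 : ℝ) < i := by exact_mod_cast hi
  have hfac : (i.factorial : ℝ) ^ α = (i : ℝ) ^ α * ((i - 1).factorial : ℝ) ^ α := by
    rw [← Nat.mul_factorial_pred hi.ne', Nat.cast_mul, Real.mul_rpow hi'.le (by positivity)]
  rw [hw i hi, hw (i + 1) (by omega), Nat.add_sub_cancel, hfac]
  have hpow : (0 : ℝ) < (i : ℝ) ^ α := by positivity
  have hfac_pos : (0 : ℝ) < ((i - 1).factorial : ℝ) ^ α := by positivity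
  field_simp
  push_cast
  ring

lemma summable_logisticWeight (hα : 0 < α) : Summable w := by
  refine summable_of_norm_succ_mul_rpow_le (C := |θ|) hα (Eventually.of_forall fun i => ?_)
  have hrec := congrArg norm (logisticWeight_succ_mul hw hα.ne' i)
  have hi : (0 : ℝ) ≤ i := i.cast_nonneg
  simp only [norm_mul, Real.norm_eq_abs, abs_of_nonneg hi,
    abs_of_nonneg (by positivity : (0 : ℝ) ≤ i + 1),
    abs_of_nonneg (by positivity : (0 : ℝ) ≤ (i : ℝ) ^ α)] at hrec
  rw [Real.norm_eq_abs, Real.norm_eq_abs]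
  refine le_of_mul_le_mul_left ?_ (by positivity : (0 : ℝ) < i + 1)
  nlinarith [mul_nonneg (abs_nonneg θ) (abs_nonneg (w i))]

end LogisticWeights

theorem stmt_0_general (θ α : ℝ) (hα : 0 < α)
    (w : ℕ → ℝ)
    (hw : ∀ i : ℕ, 1 ≤ i →
      w i = θ ^ i / ((i : ℝ) * ((Nat.factorial (i - 1) : ℝ) ^ α))) :
    Summable w ∧
    ∀ b c : ℝ, 0 < b → 0 < c → θ = b / c →
      ∀ i : ℕ, 1 ≤ i →
        b * ((i : ℝ) - 1) * w (i - 1)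
          + c * ((i : ℝ) + 1) * (i : ℝ) ^ α * w (i + 1)
        = (i : ℝ) * (b + c * ((i : ℝ) - 1) ^ α) * w i := by
  refine ⟨summable_logisticWeight hw hα, fun b c _ hc hθ i hi => ?_⟩
  have hb : b = c * θ := by rw [hθ]; field_simp
  have detailed (j : ℕ) :
      b * j * w j = c * ((j + 1 : ℕ) : ℝ) * (((j + 1 : ℕ) : ℝ) - 1) ^ α * w (j + 1) := by
    push_cast
    rw [add_sub_cancel_right, hb]
    linear_combination -c * logisticWeight_succ_mul hw hα.ne' j
  obtain ⟨j, rfl⟩ : ∃ j, i = j + 1 := ⟨i - 1, by omega⟩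
  have global := balance_of_detailed_balance
    (β := fun i => b * i) (δ := fun i => c * i * ((i : ℝ) - 1) ^ α) detailed j
  push_cast at global ⊢
  rw [show (j : ℝ) + 2 - 1 = j + 1 by ring] at global
  simp only [add_sub_cancel_right] at global ⊢
  linear_combination global

/-- The stationary weights of the α-logistic branching process with parameters (b, c, 0):
`w i = θ^i / (i * ((i-1)!)^α)` for `i ≥ 1` (and `w 0 = 0`) are summable, and satisfy the
balance (stationarity) equation
`b(i−1)w_{i−1} + c(i+1)i^α w_{i+1} = i(b + c(i−1)^α) w_i` for every `i ≥ 1`,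
where `θ = b/c`. -/
theorem stmt_0 (θ α : ℝ) (hθ : 0 < θ) (hα : 0 < α)
    (w : ℕ → ℝ) (hw0 : w 0 = 0)
    (hw : ∀ i : ℕ, 1 ≤ i →
      w i = θ ^ i / ((i : ℝ) * ((Nat.factorial (i - 1) : ℝ) ^ α))) :
    Summable w ∧
    ∀ b c : ℝ, 0 < b → 0 < c → θ = b / c →
      ∀ i : ℕ, 1 ≤ i →
        b * ((i : ℝ) - 1) * w (i - 1)
          + c * ((i : ℝ) + 1) * (i : ℝ) ^ α * w (i + 1)
        = (i : ℝ) * (b + c * ((i : ℝ) - 1) ^ α) * w i :=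
  stmt_0_general θ α hα w hw
end

section
/- Fix b, c > 0 and set θ = b/c. Define π_i = e^{−θ} θ^i / ((1 − e^{−θ}) i!) for i ≥ 1 and π_0 = 0 (the law of a Poisson(θ) variable conditioned on being nonzero). Then Σ_{i≥1} π_i = 1, for every integer i ≥ 1 one has the stationarity (balance) equation b(i−1)π_{i−1} + c(i+1)i π_{i+1} = i(b + c(i−1)) π_i, and the mean satisfies Σ_{i≥1} i·π_i = θ/(1 − e^{−θ}). -/
/-!
The conditioned law is detailed-balanced: `θ · i · π_i = (i + 1) · i · π_{i+1}`, i.e. the flow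
`i → i + 1` at rate `b i` equals the flow `i + 1 → i` at rate `c (i + 1) i` once `b = c θ`, and
adding detailed balance at `i - 1` and at `i` gives the stationarity equation. The total mass and
the mean come from the exponential series `∑ θⁿ/n! = e^θ` and `∑ n θⁿ/n! = θ e^θ`, after removing
the term `n = 0`.
-/

open Real Nat

lemma HasSum.of_succ {α : Type*} [AddCommGroup α] [TopologicalSpace α] [IsTopologicalAddGroup α]
    {f : ℕ → α} {a : α} (h0 : f 0 = 0) (h : HasSum (fun n => f (n + 1)) a) : HasSum f a :=
  (hasSum_nat_add_iff' 1).mp (by simpa [h0] using h)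

lemma hasSum_pow_succ_div_factorial_succ (x : ℝ) :
    HasSum (fun n : ℕ => x ^ (n + 1) / (n + 1)!) (exp x - 1) := by
  simpa [← exp_eq_exp_ℝ] using
    (hasSum_nat_add_iff' 1).mpr (NormedSpace.expSeries_div_hasSum_exp x)

lemma hasSum_mul_pow_div_factorial (x : ℝ) :
    HasSum (fun n : ℕ => n * (x ^ n / n !)) (x * exp x) := by
  refine HasSum.of_succ (by simp) ?_
  have hshift : (fun n : ℕ => ((n + 1 : ℕ) : ℝ) * (x ^ (n + 1) / (n + 1)!))
      = fun n => x * (x ^ n / n !) := by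
    funext n
    rw [factorial_succ]
    push_cast
    field_simp
    ring
  rw [hshift, exp_eq_exp_ℝ]
  exact (NormedSpace.expSeries_div_hasSum_exp x).mul_left x

noncomputable def zeroTruncatedPoisson (θ : ℝ) (i : ℕ) : ℝ :=
  if i = 0 then 0 else exp (-θ) * θ ^ i / ((1 - exp (-θ)) * i !)

lemma zeroTruncatedPoisson_zero (θ : ℝ) : zeroTruncatedPoisson θ 0 = 0 := if_pos rfl

lemma zeroTruncatedPoisson_succ (θ : ℝ) (n : ℕ) :
    zeroTruncatedPoisson θ (n + 1) = exp (-θ) / (1 - exp (-θ)) * (θ ^ (n + 1) / (n + 1)!) := by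
  rw [zeroTruncatedPoisson, if_neg n.succ_ne_zero, mul_div_mul_comm]

lemma hasSum_zeroTruncatedPoisson {θ : ℝ} (hθ : θ ≠ 0) : HasSum (zeroTruncatedPoisson θ) 1 := by
  have hZ : 1 - exp (-θ) ≠ 0 := by
    rw [sub_ne_zero, ne_comm, Ne, exp_eq_one_iff, neg_eq_zero]
    exact hθ
  have hmass : exp (-θ) / (1 - exp (-θ)) * (exp θ - 1) = 1 := by
    rw [div_mul_eq_mul_div, mul_sub, ← exp_add, neg_add_cancel, exp_zero, mul_one, div_self hZ]
  refine HasSum.of_succ (zeroTruncatedPoisson_zero θ) ?_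
  have h := (hasSum_pow_succ_div_factorial_succ θ).mul_left (exp (-θ) / (1 - exp (-θ)))
  rwa [hmass, ← funext (zeroTruncatedPoisson_succ θ)] at h

lemma hasSum_mul_zeroTruncatedPoisson (θ : ℝ) :
    HasSum (fun i : ℕ => i * zeroTruncatedPoisson θ i) (θ / (1 - exp (-θ))) := by
  have hmean : exp (-θ) / (1 - exp (-θ)) * (θ * exp θ) = θ / (1 - exp (-θ)) := by
    rw [div_mul_eq_mul_div, mul_left_comm, ← exp_add, neg_add_cancel, exp_zero, mul_one]
  have hterm (i : ℕ) :
      i * zeroTruncatedPoisson θ i = exp (-θ) / (1 - exp (-θ)) * (i * (θ ^ i / i !)) := by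
    rcases i with _ | n
    · simp
    · rw [zeroTruncatedPoisson_succ, mul_left_comm]
  rw [funext hterm, ← hmean]
  exact (hasSum_mul_pow_div_factorial θ).mul_left _

lemma zeroTruncatedPoisson_detailed_balance (θ : ℝ) (i : ℕ) :
    θ * i * zeroTruncatedPoisson θ i = (i + 1) * i * zeroTruncatedPoisson θ (i + 1) := by
  rcases i with _ | n
  · simp
  · rw [zeroTruncatedPoisson_succ, zeroTruncatedPoisson_succ, factorial_succ (n + 1)]
    push_cast
    field_simp
    ring

lemma balance_of_detailed_balance_s1 {b c : ℝ} {p : ℕ → ℝ}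
    (h : ∀ i : ℕ, b * i * p i = c * (i + 1) * i * p (i + 1)) {i : ℕ} (hi : 1 ≤ i) :
    b * ((i : ℝ) - 1) * p (i - 1) + c * ((i : ℝ) + 1) * (i : ℝ) * p (i + 1)
      = (i : ℝ) * (b + c * ((i : ℝ) - 1)) * p i := by
  obtain ⟨j, rfl⟩ := exists_add_of_le hi
  have hj := h j
  have hj1 := h (1 + j)
  simp only [add_comm 1 j, add_tsub_cancel_right] at hj1 ⊢
  push_cast at hj1 ⊢
  linear_combination hj - hj1

/-- For the (binary) logistic branching process with parameters (b, c, 0): the law of a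
Poisson(θ) variable conditioned to be nonzero, `p i = e^{-θ} θ^i / ((1 - e^{-θ}) i!)` for
`i ≥ 1`, is a probability vector, it satisfies the stationarity (balance) equation
`b(i−1)p_{i−1} + c(i+1)i p_{i+1} = i(b + c(i−1)) p_i` for every `i ≥ 1`, and its mean is
`θ/(1 − e^{−θ})`, where `θ = b/c`. -/
theorem stmt_1 (b c : ℝ) (hb : 0 < b) (hc : 0 < c) (θ : ℝ) (hθ : θ = b / c)
    (p : ℕ → ℝ) (hp0 : p 0 = 0)
    (hp : ∀ i : ℕ, 1 ≤ i →
      p i = Real.exp (-θ) * θ ^ i / ((1 - Real.exp (-θ)) * (Nat.factorial i : ℝ))) :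
    (∑' i : ℕ, p i) = 1 ∧
    (∀ i : ℕ, 1 ≤ i →
      b * ((i : ℝ) - 1) * p (i - 1) + c * ((i : ℝ) + 1) * (i : ℝ) * p (i + 1)
        = (i : ℝ) * (b + c * ((i : ℝ) - 1)) * p i) ∧
    (∑' i : ℕ, (i : ℝ) * p i) = θ / (1 - Real.exp (-θ)) := by
  have hp_eq : p = zeroTruncatedPoisson θ := by
    funext i
    rcases i.eq_zero_or_pos with rfl | hi
    · rw [hp0, zeroTruncatedPoisson_zero]
    · rw [hp i hi, zeroTruncatedPoisson, if_neg hi.ne']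
  have hb_eq : b = c * θ := by
    rw [hθ, mul_div_cancel₀ _ hc.ne']
  subst hp_eq
  refine ⟨(hasSum_zeroTruncatedPoisson ?_).tsum_eq, fun i hi =>
    balance_of_detailed_balance_s1 (fun j => ?_) hi, (hasSum_mul_zeroTruncatedPoisson θ).tsum_eq⟩
  · rw [hθ]
    exact (div_pos hb hc).ne'
  · rw [hb_eq]
    linear_combination c * zeroTruncatedPoisson_detailed_balance θ j
end

section
/- Let (u_n)_{n ≥ 2} be any real sequence and define the doubly indexed sequence v by v_{n,m} = (n m / (n+m)) u_{n+m} for (n,m) ≠ (0,0) (so v vanishes whenever n = 0 or m = 0). Then for all integers n, m ≥ 1, (Δ₀ v)_{n,m} = n m (L u)_{n+m}. -/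
/-- The neutral two-type operator Δ₀ acting on doubly indexed real sequences. -/
noncomputable def Delta0 (b c d : ℝ) (w : ℕ → ℕ → ℝ) (n m : ℕ) : ℝ :=
  ((n : ℝ) + (m : ℝ)) * (b + c * ((n : ℝ) + (m : ℝ) - 1) + d) * w n m
    - b * (n : ℝ) * w (n + 1) m
    - b * (m : ℝ) * w n (m + 1)
    - (n : ℝ) * (c * ((n : ℝ) + (m : ℝ) - 1) + d) * w (n - 1) m
    - (m : ℝ) * (c * ((n : ℝ) + (m : ℝ) - 1) + d) * w n (m - 1)

/-- The one-dimensional operator L acting on real sequences (for indices `n ≥ 2`). -/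
noncomputable def Lop (b c d : ℝ) (w : ℕ → ℝ) (n : ℕ) : ℝ :=
  -b * (((n : ℝ) + 2) / ((n : ℝ) + 1)) * w (n + 1)
    + (b + c * ((n : ℝ) - 1) + d) * w n
    - ((n : ℝ) - 2) * (c + d / ((n : ℝ) - 1)) * w (n - 1)

set_option maxHeartbeats 1000000 in
/-- If `v_{n,m} = (nm/(n+m)) u_{n+m}`, then `(Δ₀ v)_{n,m} = nm (L u)_{n+m}` for `n, m ≥ 1`. -/
theorem stmt_3 (b c d : ℝ) (hb : 0 < b) (hc : 0 < c) (hd : 0 ≤ d)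
    (u : ℕ → ℝ) (v : ℕ → ℕ → ℝ)
    (hv : ∀ n m : ℕ, (n, m) ≠ (0, 0) →
      v n m = ((n : ℝ) * (m : ℝ) / ((n : ℝ) + (m : ℝ))) * u (n + m)) :
    ∀ n m : ℕ, 1 ≤ n → 1 ≤ m →
      Delta0 b c d v n m = (n : ℝ) * (m : ℝ) * Lop b c d u (n + m) := by
  intro n' m' hn hm
  obtain ⟨n, rfl⟩ : ∃ k, n' = k + 1 := ⟨n' - 1, by omega⟩
  obtain ⟨m, rfl⟩ : ∃ k, m' = k + 1 := ⟨m' - 1, by omega⟩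
  clear hn hm
  have h1 : v (n+1) (m+1) = ((n+1 : ℝ) * (m+1) / ((n+1) + (m+1))) * u ((n+1) + (m+1)) := by
    rw [hv (n+1) (m+1) (by simp)]; push_cast; ring_nf
  have h2 : v (n+1+1) (m+1) = ((n+2 : ℝ) * (m+1) / ((n+2) + (m+1))) * u ((n+2) + (m+1)) := by
    rw [hv (n+1+1) (m+1) (by simp)]; push_cast; ring_nf
  have h3 : v (n+1) (m+1+1) = ((n+1 : ℝ) * (m+2) / ((n+1) + (m+2))) * u ((n+1) + (m+2)) := by
    rw [hv (n+1) (m+1+1) (by simp)]; push_cast; ring_nf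
  have h4 : v (n+1-1) (m+1) = ((n : ℝ) * (m+1) / ((n) + (m+1))) * u (n + (m+1)) := by
    simp only [Nat.add_sub_cancel]
    rw [hv n (m+1) (by simp)]; push_cast; ring_nf
  have h5 : v (n+1) (m+1-1) = ((n+1 : ℝ) * m / ((n+1) + m)) * u ((n+1) + m) := by
    simp only [Nat.add_sub_cancel]
    rw [hv (n+1) m (by simp)]; push_cast; ring_nf
  have hL : (n+1) + (m+1) = n + m + 2 := by omega
  rw [hL]
  have e1 : (n+1) + (m+1) = n + m + 2 := by omega
  have e2 : (n+2) + (m+1) = n + m + 2 + 1 := by omega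
  have e3 : (n+1) + (m+2) = n + m + 2 + 1 := by omega
  have e4 : n + (m+1) = n + m + 2 - 1 := by omega
  have e5 : (n+1) + m = n + m + 2 - 1 := by omega
  rw [e1] at h1; rw [e2] at h2; rw [e3] at h3; rw [e4] at h4; rw [e5] at h5
  have e6 : n + m + 2 + 1 = (n+m+2) + 1 := rfl
  have i1 : n + m + 2 - 1 = n + m + 1 := by omega
  have i2 : n + m + 2 + 1 = n + m + 3 := by omega
  rw [i1] at h4 h5
  rw [i2] at h2 h3
  simp only [Delta0, Lop, h1, h2, h3, h4, h5, i1, i2]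
  generalize u (n + m + 1) = U1
  generalize u (n + m + 2) = U2
  generalize u (n + m + 3) = U3
  have hnm : ((n:ℝ) + m + 2) ≠ 0 := by positivity
  have hnm1 : ((n:ℝ) + m + 3) ≠ 0 := by positivity
  have hnm2 : ((n:ℝ) + m + 1) ≠ 0 := by positivity
  have c1 : ((n + m + 2 : ℕ) : ℝ) = (n:ℝ) + m + 2 := by push_cast; ring
  rw [c1]
  push_cast
  have d1 : ((n:ℝ) + 1 + (m + 1)) = (n:ℝ) + m + 2 := by ring
  have d2 : ((n:ℝ) + 2 + (m + 1)) = (n:ℝ) + m + 3 := by ring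
  have d3 : ((n:ℝ) + 1 + (m + 2)) = (n:ℝ) + m + 3 := by ring
  have d4 : ((n:ℝ) + (m + 1)) = (n:ℝ) + m + 1 := by ring
  have d5 : ((n:ℝ) + 1 + m) = (n:ℝ) + m + 1 := by ring
  have d6 : ((n:ℝ) + m + 2 + 2) = (n:ℝ) + m + 4 := by ring
  have d7 : ((n:ℝ) + m + 2 + 1) = (n:ℝ) + m + 3 := by ring
  have d8 : ((n:ℝ) + m + 2 - 1) = (n:ℝ) + m + 1 := by ring
  rw [d1, d2, d3, d4, d5, d6, d7, d8]
  field_simp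
  ring
end

section
/- Let (u_n)_{n ≥ 3} be any real sequence and define the doubly indexed sequence v by v_{n,m} = (n m (n−m) / (n+m)) u_{n+m} for (n,m) ≠ (0,0) (so v vanishes whenever n = 0, m = 0 or n = m). Then for all integers n, m ≥ 1, (Δ₀ v)_{n,m} = n m (n−m) (L' u)_{n+m}. -/
/-- The one-dimensional operator L' acting on real sequences (for indices `n ≥ 3`). -/
noncomputable def Lop' (b c d : ℝ) (w : ℕ → ℝ) (n : ℕ) : ℝ :=
  -b * (((n : ℝ) + 3) / ((n : ℝ) + 1)) * w (n + 1)
    + (b + c * ((n : ℝ) - 1) + d) * w n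
    - ((n : ℝ) - 3) * (c + d / ((n : ℝ) - 1)) * w (n - 1)

set_option maxHeartbeats 2000000 in
/-- If `v_{n,m} = (nm(n−m)/(n+m)) u_{n+m}`, then `(Δ₀ v)_{n,m} = nm(n−m) (L' u)_{n+m}`
for `n, m ≥ 1`. -/
theorem stmt_4 (b c d : ℝ) (hb : 0 < b) (hc : 0 < c) (hd : 0 ≤ d)
    (u : ℕ → ℝ) (v : ℕ → ℕ → ℝ)
    (hv : ∀ n m : ℕ, (n, m) ≠ (0, 0) →
      v n m = ((n : ℝ) * (m : ℝ) * ((n : ℝ) - (m : ℝ)) / ((n : ℝ) + (m : ℝ))) * u (n + m)) :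
    ∀ n m : ℕ, 1 ≤ n → 1 ≤ m →
      Delta0 b c d v n m
        = (n : ℝ) * (m : ℝ) * ((n : ℝ) - (m : ℝ)) * Lop' b c d u (n + m) := by
  intro n m hn hm
  obtain ⟨a, rfl⟩ : ∃ a, n = a + 1 := ⟨n - 1, (Nat.succ_pred_eq_of_pos hn).symm⟩
  obtain ⟨e, rfl⟩ : ∃ e, m = e + 1 := ⟨m - 1, (Nat.succ_pred_eq_of_pos hm).symm⟩
  have h1 := hv (a + 1) (e + 1) (by simp)
  have h2 := hv (a + 2) (e + 1) (by simp)
  have h3 := hv (a + 1) (e + 2) (by simp)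
  have h4 := hv a (e + 1) (by simp)
  have h5 := hv (a + 1) e (by simp)
  simp only [Delta0, Lop']
  have e1 : (a + 1 + 1 : ℕ) = a + 2 := rfl
  have e2 : (e + 1 + 1 : ℕ) = e + 2 := rfl
  have e3 : (a + 1 - 1 : ℕ) = a := rfl
  have e4 : (e + 1 - 1 : ℕ) = e := rfl
  have e5 : (a + 1 + (e + 1) : ℕ) = a + e + 2 := by ring
  have e6 : (a + 2 + (e + 1) : ℕ) = a + e + 3 := by ring
  have e7 : (a + 1 + (e + 2) : ℕ) = a + e + 3 := by ring
  have e8 : (a + (e + 1) : ℕ) = a + e + 1 := by ring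
  have e9 : (a + 1 + e : ℕ) = a + e + 1 := by ring
  have e10 : (a + e + 2 + 1 : ℕ) = a + e + 3 := rfl
  have e11 : (a + e + 2 - 1 : ℕ) = a + e + 1 := rfl
  rw [e1, e2, e3, e4] at *
  rw [e5] at h1
  rw [e6] at h2
  rw [e7] at h3
  rw [e8] at h4
  rw [e9] at h5
  rw [h1, h2, h3, h4, h5, e5, e10, e11]
  push_cast
  have hne1 : (a : ℝ) + e + 2 ≠ 0 := by positivity
  have hne2 : (a : ℝ) + e + 3 ≠ 0 := by positivity
  have hne3 : (a : ℝ) + e + 1 ≠ 0 := by positivity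
  have hne4 : (a : ℝ) + 1 + (e + 1) - 1 ≠ 0 := by
    have : (a : ℝ) + 1 + (e + 1) - 1 = (a : ℝ) + e + 1 := by ring
    rw [this]; exact hne3
  have hne5 : (a : ℝ) + 1 + (e + 1) + 1 ≠ 0 := by positivity
  have key : ((a : ℝ) + ↑e + 2) - 1 = (a : ℝ) + ↑e + 1 := by ring
  rw [key]
  field_simp
  ring
end

section
/- Fix b, c > 0 and d ≥ 0. Let (D_n)_{n ≥ 2} be a bounded real sequence with L D = δ^{(2)}. Then the sequence u^λ := −(d/(2bc)) e^{(−1)} + (d(c+d)/(2bc)) D + (1/(2c)) e^{(1)} is bounded and satisfies (L u^λ)_n = 1/n − 1/(n+1) for every n ≥ 2, i.e., L u^λ = e^{(0)} − e^{(1)}. -/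
theorem Lop_linear_comb (b c d α β γ : ℝ) (f g h : ℕ → ℝ) (n : ℕ) :
    Lop b c d (fun m => α * f m + β * g m + γ * h m) n
      = α * Lop b c d f n + β * Lop b c d g n + γ * Lop b c d h n := by
  simp only [Lop]
  ring

theorem Lop_inv_add_one (b c d : ℝ) {n : ℕ} (hn : 2 ≤ n) :
    Lop b c d (fun m => 1 / ((m : ℝ) + 1)) n
      = 2 * (c * ((n : ℝ) - 1) + d) / (((n : ℝ) - 1) * n * (n + 1)) := by
  have hn' : (2 : ℝ) ≤ n := by exact_mod_cast hn
  have h1 : (n : ℝ) - 1 ≠ 0 := by linarith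
  have h2 : (n : ℝ) ≠ 0 := by linarith
  simp only [Lop, Nat.cast_sub (by omega : 1 ≤ n), Nat.cast_add, Nat.cast_one, sub_add_cancel]
  field_simp
  ring

theorem Lop_inv_sub_one (b c d : ℝ) {n : ℕ} (hn : 2 ≤ n) :
    Lop b c d (fun m => 1 / ((m : ℝ) - 1)) n
      = 2 * b / (((n : ℝ) - 1) * n * (n + 1)) + if n = 2 then c + d else 0 := by
  simp only [Lop, Nat.cast_sub (by omega : 1 ≤ n), Nat.cast_add, Nat.cast_one, add_sub_cancel_right]
  -- for `n ≥ 3` the `c`, `d` parts of the diagonal and backward terms cancel; at `n = 2` the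
  -- backward term is `0 * (1 / 0)`, so they survive as `c + d`
  split_ifs with hn2
  · subst hn2
    norm_num
    ring
  · have hn' : (3 : ℝ) ≤ n := by exact_mod_cast (by omega : 3 ≤ n)
    have h1 : (n : ℝ) - 1 ≠ 0 := by linarith
    have h2 : (n : ℝ) ≠ 0 := by linarith
    have h3 : (n : ℝ) - 1 - 1 ≠ 0 := by linarith
    field_simp
    ring

theorem exists_abs_linear_comb_le {ι : Type*} {p : ι → Prop} {f g h : ι → ℝ}
    (hf : ∃ C, ∀ i, p i → |f i| ≤ C) (hg : ∃ C, ∀ i, p i → |g i| ≤ C)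
    (hh : ∃ C, ∀ i, p i → |h i| ≤ C) (α β γ : ℝ) :
    ∃ C, ∀ i, p i → |α * f i + β * g i + γ * h i| ≤ C := by
  obtain ⟨A, hA⟩ := hf
  obtain ⟨B, hB⟩ := hg
  obtain ⟨C, hC⟩ := hh
  refine ⟨|α| * A + |β| * B + |γ| * C, fun i hi => ?_⟩
  calc |α * f i + β * g i + γ * h i| ≤ |α * f i| + |β * g i| + |γ * h i| := abs_add_three _ _ _
    _ = |α| * |f i| + |β| * |g i| + |γ| * |h i| := by simp only [abs_mul]
    _ ≤ |α| * A + |β| * B + |γ| * C := by gcongr <;> simp_all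

theorem abs_one_div_le_one {x : ℝ} (hx : 1 ≤ x) : |1 / x| ≤ 1 := by
  rw [abs_of_nonneg (by positivity)]
  exact div_le_one_of_le₀ hx (by linarith)

theorem stmt_5_general (b c d : ℝ) (hb : 0 < b) (hc : 0 < c)
    (D : ℕ → ℝ) (hDbdd : ∃ C : ℝ, ∀ n : ℕ, 2 ≤ n → |D n| ≤ C)
    (hLD : ∀ n : ℕ, 2 ≤ n → Lop b c d D n = if n = 2 then 1 else 0) :
    (∃ C : ℝ, ∀ n : ℕ, 2 ≤ n →
      |(-(d / (2 * b * c))) * (1 / ((n : ℝ) - 1))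
        + (d * (c + d) / (2 * b * c)) * D n
        + (1 / (2 * c)) * (1 / ((n : ℝ) + 1))| ≤ C) ∧
    ∀ n : ℕ, 2 ≤ n →
      Lop b c d
        (fun m : ℕ => (-(d / (2 * b * c))) * (1 / ((m : ℝ) - 1))
          + (d * (c + d) / (2 * b * c)) * D m
          + (1 / (2 * c)) * (1 / ((m : ℝ) + 1))) n
        = 1 / (n : ℝ) - 1 / ((n : ℝ) + 1) := by
  have cast_ge_two {n : ℕ} (hn : 2 ≤ n) : (2 : ℝ) ≤ n := by exact_mod_cast hn
  refine ⟨exists_abs_linear_comb_le ?_ hDbdd ?_ _ _ _, fun n hn => ?_⟩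
  · exact ⟨1, fun n hn => abs_one_div_le_one (by linarith [cast_ge_two hn])⟩
  · exact ⟨1, fun n hn => abs_one_div_le_one (by linarith [cast_ge_two hn])⟩
  rw [Lop_linear_comb, Lop_inv_sub_one b c d hn, Lop_inv_add_one b c d hn, hLD n hn]
  have h1 : (n : ℝ) - 1 ≠ 0 := by linarith [cast_ge_two hn]
  have h2 : (n : ℝ) ≠ 0 := by linarith [cast_ge_two hn]
  have h3 : (n : ℝ) + 1 ≠ 0 := by linarith [cast_ge_two hn]
  split_ifs <;> field_simp <;> ring

/-- If `D` is a bounded sequence with `L D = δ^{(2)}`, then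
`u^λ = −(d/(2bc)) e^{(−1)} + (d(c+d)/(2bc)) D + (1/(2c)) e^{(1)}` is bounded and satisfies
`L u^λ = e^{(0)} − e^{(1)}`, i.e. `(L u^λ)_n = 1/n − 1/(n+1)` for every `n ≥ 2`. -/
theorem stmt_5 (b c d : ℝ) (hb : 0 < b) (hc : 0 < c) (hd : 0 ≤ d)
    (D : ℕ → ℝ) (hDbdd : ∃ C : ℝ, ∀ n : ℕ, 2 ≤ n → |D n| ≤ C)
    (hLD : ∀ n : ℕ, 2 ≤ n → Lop b c d D n = if n = 2 then 1 else 0) :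
    (∃ C : ℝ, ∀ n : ℕ, 2 ≤ n →
      |(-(d / (2 * b * c))) * (1 / ((n : ℝ) - 1))
        + (d * (c + d) / (2 * b * c)) * D n
        + (1 / (2 * c)) * (1 / ((n : ℝ) + 1))| ≤ C) ∧
    ∀ n : ℕ, 2 ≤ n →
      Lop b c d
        (fun m : ℕ => (-(d / (2 * b * c))) * (1 / ((m : ℝ) - 1))
          + (d * (c + d) / (2 * b * c)) * D m
          + (1 / (2 * c)) * (1 / ((m : ℝ) + 1))) n
        = 1 / (n : ℝ) - 1 / ((n : ℝ) + 1) :=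
  stmt_5_general b c d hb hc D hDbdd hLD
end

section
/- Fix b, c > 0 and d ≥ 0. Let (D_n)_{n ≥ 2} be a bounded real sequence with L D = δ^{(2)}. Then the sequence u^α := ((2c−d)/(2bc)) e^{(−1)} − ((2c−d)(c+d)/(2bc)) D + (1/(2c)) e^{(1)} is bounded and satisfies (L u^α)_n = 1/(n−1) − 1/n for every n ≥ 2, i.e., L u^α = e^{(−1)} − e^{(0)}. -/
set_option maxHeartbeats 1000000 in
private lemma key6 (b c d x : ℝ) (hb : b ≠ 0) (hc : c ≠ 0) (h1 : x - 1 ≠ 0) (h0 : x ≠ 0)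
    (h2 : x + 1 ≠ 0) (h3 : x + 2 ≠ 0) (h4 : x - 2 ≠ 0) :
    (2*c-d)/(2*b*c) * (-b*((x+2)/(x+1))*(1/x) + (b + c*(x-1) + d)*(1/(x-1))
        - (x-2)*(c + d/(x-1))*(1/(x-2)))
      + 1/(2*c) * (-b*((x+2)/(x+1))*(1/(x+2)) + (b + c*(x-1)+d)*(1/(x+1))
        - (x-2)*(c + d/(x-1))*(1/x))
    = 1/(x-1) - 1/x := by
  field_simp
  ring


/-- If `D` is a bounded sequence with `L D = δ^{(2)}`, then
`u^α = ((2c−d)/(2bc)) e^{(−1)} − ((2c−d)(c+d)/(2bc)) D + (1/(2c)) e^{(1)}` is bounded and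
satisfies `L u^α = e^{(−1)} − e^{(0)}`, i.e. `(L u^α)_n = 1/(n−1) − 1/n` for every `n ≥ 2`. -/
theorem stmt_6 (b c d : ℝ) (hb : 0 < b) (hc : 0 < c) (hd : 0 ≤ d)
    (D : ℕ → ℝ) (hDbdd : ∃ C : ℝ, ∀ n : ℕ, 2 ≤ n → |D n| ≤ C)
    (hLD : ∀ n : ℕ, 2 ≤ n → Lop b c d D n = if n = 2 then 1 else 0) :
    (∃ C : ℝ, ∀ n : ℕ, 2 ≤ n →
      |((2 * c - d) / (2 * b * c)) * (1 / ((n : ℝ) - 1))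
        - ((2 * c - d) * (c + d) / (2 * b * c)) * D n
        + (1 / (2 * c)) * (1 / ((n : ℝ) + 1))| ≤ C) ∧
    ∀ n : ℕ, 2 ≤ n →
      Lop b c d
        (fun m : ℕ => ((2 * c - d) / (2 * b * c)) * (1 / ((m : ℝ) - 1))
          - ((2 * c - d) * (c + d) / (2 * b * c)) * D m
          + (1 / (2 * c)) * (1 / ((m : ℝ) + 1))) n
        = 1 / ((n : ℝ) - 1) - 1 / (n : ℝ) := by
  have hb' : b ≠ 0 := hb.ne'
  have hc' : c ≠ 0 := hc.ne'
  constructor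
  · obtain ⟨C, hC⟩ := hDbdd
    refine ⟨|(2 * c - d) / (2 * b * c)| + |(2 * c - d) * (c + d) / (2 * b * c)| * max C 0
      + |1 / (2 * c)|, fun n hn => ?_⟩
    have h2 : (2:ℝ) ≤ (n:ℝ) := by exact_mod_cast hn
    have e1 : |1/((n:ℝ)-1)| ≤ 1 := by
      rw [abs_of_nonneg (div_nonneg zero_le_one (by linarith))]
      rw [div_le_one (by linarith)]; linarith
    have e2 : |1/((n:ℝ)+1)| ≤ 1 := by
      rw [abs_of_nonneg (div_nonneg zero_le_one (by linarith))]
      rw [div_le_one (by linarith)]; linarith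
    have eD : |D n| ≤ max C 0 := le_trans (hC n hn) (le_max_left _ _)
    set A := (2 * c - d) / (2 * b * c)
    set B := (2 * c - d) * (c + d) / (2 * b * c)
    set G := 1 / (2 * c)
    calc |A * (1/((n:ℝ)-1)) - B * D n + G * (1/((n:ℝ)+1))|
        ≤ |A * (1/((n:ℝ)-1)) - B * D n| + |G * (1/((n:ℝ)+1))| := abs_add_le _ _
      _ ≤ |A * (1/((n:ℝ)-1))| + |B * D n| + |G * (1/((n:ℝ)+1))| := by
          have := abs_sub (A * (1/((n:ℝ)-1))) (B * D n)
          linarith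
      _ ≤ |A| + |B| * max C 0 + |G| := by
          rw [abs_mul, abs_mul, abs_mul]
          have h1 : |A| * |1/((n:ℝ)-1)| ≤ |A| * 1 :=
            mul_le_mul_of_nonneg_left e1 (abs_nonneg _)
          have h2' : |B| * |D n| ≤ |B| * max C 0 :=
            mul_le_mul_of_nonneg_left eD (abs_nonneg _)
          have h3 : |G| * |1/((n:ℝ)+1)| ≤ |G| * 1 :=
            mul_le_mul_of_nonneg_left e2 (abs_nonneg _)
          linarith
  · intro n hn
    have hsplit : Lop b c d
        (fun m : ℕ => ((2 * c - d) / (2 * b * c)) * (1 / ((m : ℝ) - 1))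
          - ((2 * c - d) * (c + d) / (2 * b * c)) * D m
          + (1 / (2 * c)) * (1 / ((m : ℝ) + 1))) n
        = ((2 * c - d) / (2 * b * c)) * Lop b c d (fun m => 1 / ((m : ℝ) - 1)) n
          - ((2 * c - d) * (c + d) / (2 * b * c)) * Lop b c d D n
          + (1 / (2 * c)) * Lop b c d (fun m => 1 / ((m : ℝ) + 1)) n := by
      unfold Lop; ring
    rw [hsplit, hLD n hn]
    rcases eq_or_lt_of_le hn with hn2 | hn3
    · subst hn2
      rw [if_pos rfl]
      unfold Lop
      norm_num
      field_simp
      ring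
    · have hn3 : 3 ≤ n := hn3
      rw [if_neg (by omega)]
      have c1 : ((n - 1 : ℕ) : ℝ) = (n:ℝ) - 1 := by
        have h1n : 1 ≤ n := by omega
        push_cast [h1n]; ring
      have c2 : ((n + 1 : ℕ) : ℝ) = (n:ℝ) + 1 := by push_cast; ring
      have h3 : (3:ℝ) ≤ (n:ℝ) := by exact_mod_cast hn3
      have d1 : (n:ℝ) - 1 ≠ 0 := by linarith
      have d0 : (n:ℝ) ≠ 0 := by linarith
      have d2 : (n:ℝ) + 1 ≠ 0 := by linarith
      have d3 : (n:ℝ) + 2 ≠ 0 := by linarith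
      have d4 : (n:ℝ) - 2 ≠ 0 := by linarith
      unfold Lop
      simp only [c1, c2, mul_zero, sub_zero]
      linear_combination key6 b c d (n:ℝ) hb' hc' d1 d0 d2 d3 d4
end

section
/- Fix b, c > 0 and d = 0. Let (Φ_n)_{n ≥ 2} satisfy Φ_2 = 1 and c(n+2)Φ_{n+1} + (b − c(n+1))Φ_n − b((n−2)/(n−1))Φ_{n−1} = 0 for n ≥ 2, and assume that (n Φ_n)_{n ≥ 2} converges to a finite limit Φ_∞. Then for every n ≥ 2 the series W_n := Σ_{k ≥ 2} Φ_k / (n+k) converges, and the sequence W = (W_n)_{n ≥ 2} satisfies (L W)_n = c Φ_∞ / (n+1) for all n ≥ 2, i.e., L W = c Φ_∞ e^{(1)}. -/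
open Filter Topology

theorem HasSum.eq_sub_of_tendsto {G : Type*} [AddCommGroup G] [TopologicalSpace G]
    [IsTopologicalAddGroup G] [T2Space G] {f : ℕ → G} {a l : G}
    (ha : HasSum (fun n => f n - f (n + 1)) a) (hf : Tendsto f atTop (𝓝 l)) :
    a = f 0 - l := by
  refine tendsto_nhds_unique ha.tendsto_sum_nat ?_
  simpa only [Finset.sum_range_sub'] using tendsto_const_nhds.sub hf

theorem hasSum_Lop {ι : Type*} (b c d : ℝ) {f : ι → ℕ → ℝ} {n : ℕ}
    (hsucc : Summable fun i => f i (n + 1)) (h : Summable fun i => f i n)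
    (hpred : Summable fun i => f i (n - 1)) :
    HasSum (fun i => Lop b c d (f i) n) (Lop b c d (fun m => ∑' i, f i m) n) :=
  ((hsucc.hasSum.mul_left _).add (h.hasSum.mul_left _)).sub (hpred.hasSum.mul_left _)

theorem summable_div_add_of_abs_mul_le {Φ : ℕ → ℝ} {M x : ℝ}
    (hM : ∀ k : ℕ, |(k : ℝ) * Φ k| ≤ M) (hx : 0 ≤ x) :
    Summable fun k : ℕ => Φ (k + 2) / (x + k + 2) := by
  have hsq : Summable fun k : ℕ => M / ((k : ℝ) + 2) ^ 2 := by
    have := (summable_nat_add_iff 2).mpr (Real.summable_one_div_nat_pow.mpr one_lt_two)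
    simpa [div_eq_mul_inv] using this.mul_left M
  refine hsq.of_norm_bounded fun k => ?_
  have hk : (0 : ℝ) < k + 2 := by positivity
  have hΦ : ((k : ℝ) + 2) * |Φ (k + 2)| ≤ M := by
    simpa [abs_mul, abs_of_pos hk] using hM (k + 2)
  calc ‖Φ (k + 2) / (x + k + 2)‖ = |Φ (k + 2)| / (x + k + 2) := by
        rw [norm_div, Real.norm_eq_abs, Real.norm_of_nonneg (by linarith)]
    _ ≤ |Φ (k + 2)| / (k + 2) := div_le_div_of_nonneg_left (abs_nonneg _) hk (by linarith)
    _ = ((k + 2) * |Φ (k + 2)|) / ((k : ℝ) + 2) ^ 2 := by field_simp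
    _ ≤ M / ((k : ℝ) + 2) ^ 2 := by gcongr

noncomputable def lopBoundary (b c : ℝ) (Φ : ℕ → ℝ) (x : ℝ) (j : ℕ) : ℝ :=
  -(j / (x + 1)) * (c * (j + 3) * Φ (j + 2) / (x + j + 1) + b * Φ (j + 1) / (x + j + 2))

theorem Lop_div_eq_lopBoundary_sub (b c : ℝ) (Φ : ℕ → ℝ)
    (hrec : ∀ n : ℕ, 2 ≤ n →
      c * ((n : ℝ) + 2) * Φ (n + 1) + (b - c * ((n : ℝ) + 1)) * Φ n
        - b * (((n : ℝ) - 2) / ((n : ℝ) - 1)) * Φ (n - 1) = 0)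
    (j : ℕ) {n : ℕ} (hn : 1 ≤ n) :
    Lop b c 0 (fun m => Φ (j + 2) / ((m : ℝ) + j + 2)) n
      = lopBoundary b c Φ n j - lopBoundary b c Φ n (j + 1) := by
  have hrec_j := hrec (j + 2) (by omega)
  rw [show j + 2 - 1 = j + 1 from rfl] at hrec_j
  push_cast at hrec_j
  obtain ⟨m, rfl⟩ := Nat.exists_eq_add_of_le' hn
  simp only [Lop, lopBoundary, Nat.add_sub_cancel, zero_div, add_zero]
  push_cast
  have hj : (j : ℝ) + 2 - 1 ≠ 0 := by linarith [(j.cast_nonneg : (0 : ℝ) ≤ j)]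
  linear_combination (norm := skip) -(((j : ℝ) + 1) / ((m + 2) * (m + j + 3))) * hrec_j
  field_simp
  ring

theorem tendsto_lopBoundary (b c : ℝ) {Φ : ℕ → ℝ} {Φinf : ℝ}
    (hlim : Tendsto (fun n : ℕ => (n : ℝ) * Φ n) atTop (𝓝 Φinf)) (x : ℝ) :
    Tendsto (lopBoundary b c Φ x) atTop (𝓝 (-(c * Φinf / (x + 1)))) := by
  have hΦ : Tendsto Φ atTop (𝓝 0) := by
    refine (hlim.div_atTop tendsto_natCast_atTop_atTop).congr' ?_
    filter_upwards [eventually_ne_atTop 0] with n hn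
    field_simp
  have hshift : Tendsto (fun j : ℕ => ((j : ℝ) + 3) * Φ (j + 2)) atTop (𝓝 Φinf) := by
    have := (hlim.comp (tendsto_add_atTop_nat 2)).add (hΦ.comp (tendsto_add_atTop_nat 2))
    rw [add_zero] at this
    refine this.congr fun j => ?_
    simp only [Function.comp_apply]
    push_cast
    ring
  have := (((tendsto_natCast_div_add_atTop (x + 1)).mul hshift).const_mul c).add
    (((tendsto_natCast_div_add_atTop (x + 2)).mul (hΦ.comp (tendsto_add_atTop_nat 1))).const_mul b)
    |>.const_mul (-(x + 1)⁻¹)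
  convert this using 2
  · simp only [lopBoundary, Function.comp_apply]
    ring
  · ring

theorem stmt_8_general (b c : ℝ)
    (Φ : ℕ → ℝ)
    (hrec : ∀ n : ℕ, 2 ≤ n →
      c * ((n : ℝ) + 2) * Φ (n + 1) + (b - c * ((n : ℝ) + 1)) * Φ n
        - b * (((n : ℝ) - 2) / ((n : ℝ) - 1)) * Φ (n - 1) = 0)
    (Φinf : ℝ)
    (hlim : Filter.Tendsto (fun n : ℕ => (n : ℝ) * Φ n) Filter.atTop (nhds Φinf)) :
    (∀ n : ℕ, 2 ≤ n → Summable (fun k : ℕ => Φ (k + 2) / ((n : ℝ) + (k : ℝ) + 2))) ∧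
    ∀ n : ℕ, 2 ≤ n →
      Lop b c 0 (fun m : ℕ => ∑' k : ℕ, Φ (k + 2) / ((m : ℝ) + (k : ℝ) + 2)) n
        = c * Φinf / ((n : ℝ) + 1) := by
  obtain ⟨M, hM⟩ : ∃ M, ∀ k : ℕ, |(k : ℝ) * Φ k| ≤ M := by
    obtain ⟨M, hM⟩ := hlim.abs.bddAbove_range
    exact ⟨M, fun k => hM (Set.mem_range_self k)⟩
  have hsum (m : ℕ) : Summable fun k : ℕ => Φ (k + 2) / ((m : ℝ) + k + 2) :=
    summable_div_add_of_abs_mul_le hM m.cast_nonneg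
  refine ⟨fun n _ => hsum n, fun n hn => ?_⟩
  have hL := hasSum_Lop b c 0 (f := fun k m => Φ (k + 2) / ((m : ℝ) + k + 2))
    (hsum (n + 1)) (hsum n) (hsum (n - 1))
  have hstep (j : ℕ) := Lop_div_eq_lopBoundary_sub b c Φ hrec j (n := n) (by omega)
  rw [funext hstep] at hL
  rw [hL.eq_sub_of_tendsto (tendsto_lopBoundary b c hlim n)]
  simp [lopBoundary]

/-- Claim 1(ii) of the paper: if `Φ_2 = 1`, `Φ` satisfies the three-term recursion and
`(n Φ_n)` converges to `Φ_∞`, then `W_n = Σ_{k ≥ 2} Φ_k/(n+k)` converges for every `n ≥ 2`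
and `L W = c Φ_∞ e^{(1)}`. -/
theorem stmt_8 (b c : ℝ) (hb : 0 < b) (hc : 0 < c)
    (Φ : ℕ → ℝ) (hΦ2 : Φ 2 = 1)
    (hrec : ∀ n : ℕ, 2 ≤ n →
      c * ((n : ℝ) + 2) * Φ (n + 1) + (b - c * ((n : ℝ) + 1)) * Φ n
        - b * (((n : ℝ) - 2) / ((n : ℝ) - 1)) * Φ (n - 1) = 0)
    (Φinf : ℝ)
    (hlim : Filter.Tendsto (fun n : ℕ => (n : ℝ) * Φ n) Filter.atTop (nhds Φinf)) :
    (∀ n : ℕ, 2 ≤ n → Summable (fun k : ℕ => Φ (k + 2) / ((n : ℝ) + (k : ℝ) + 2))) ∧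
    ∀ n : ℕ, 2 ≤ n →
      Lop b c 0 (fun m : ℕ => ∑' k : ℕ, Φ (k + 2) / ((m : ℝ) + (k : ℝ) + 2)) n
        = c * Φinf / ((n : ℝ) + 1) :=
  stmt_8_general b c Φ hrec Φinf hlim
end

section
/- Fix b, c > 0 and d = 0. Let (Ψ_n)_{n ≥ 3} satisfy Ψ_3 = 1 and c(n+3)Ψ_{n+1} + (b − c(n+1))Ψ_n − b((n−3)/(n−1))Ψ_{n−1} = 0 for n ≥ 3, and assume that (n² Ψ_n)_{n ≥ 3} converges to a finite limit Ψ_∞. Then Σ := Σ_{n ≥ 3} Ψ_n converges, for every n ≥ 3 the series Z_n := Σ_{k ≥ 3} Ψ_k/(n+k) converges, and the sequence Z − Σ e^{(2)} satisfies L'(Z − Σ e^{(2)}) = c Ψ_∞ (e^{(2)} − e^{(1)}), i.e., (L'(Z − Σe^{(2)}))_n = cΨ_∞(1/(n+2) − 1/(n+1)) for all n ≥ 3. -/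
open Filter Topology Asymptotics

lemma tendsto_natCast_add_div_natCast_add (a a' : ℝ) :
    Tendsto (fun N : ℕ => ((N : ℝ) + a) / (N + a')) atTop (𝓝 1) := by
  have h := (tendsto_natCast_div_add_atTop a').add
    (tendsto_const_nhds (x := a).div_atTop
      (tendsto_atTop_add_const_right _ a' tendsto_natCast_atTop_atTop))
  rw [add_zero] at h
  exact h.congr fun N => by rw [add_div]

section Decay

variable {Ψ : ℕ → ℝ} {L : ℝ} (hlim : Tendsto (fun n : ℕ => (n : ℝ) ^ 2 * Ψ n) atTop (𝓝 L))
include hlim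

lemma isBigO_inv_sq_of_tendsto_sq_mul : Ψ =O[atTop] fun n : ℕ => ((n : ℝ) ^ 2)⁻¹ := by
  refine ((hlim.isBigO_one ℝ).mul (isBigO_refl (fun n : ℕ => ((n : ℝ) ^ 2)⁻¹) atTop)).congr'
    ?_ (.of_forall fun _ => one_mul _)
  filter_upwards [eventually_ne_atTop 0] with n hn
  field_simp

lemma summable_of_tendsto_sq_mul : Summable Ψ :=
  summable_of_isBigO_nat (Real.summable_nat_pow_inv.2 one_lt_two)
    (isBigO_inv_sq_of_tendsto_sq_mul hlim)

lemma summable_mul_of_tendsto_sq_mul {v : ℕ → ℝ} (hv : v =O[atTop] fun _ => (1 : ℝ)) :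
    Summable fun k => v k * Ψ k :=
  summable_of_isBigO_nat (Real.summable_nat_pow_inv.2 one_lt_two)
    ((hv.mul (isBigO_inv_sq_of_tendsto_sq_mul hlim)).congr_right fun _ => one_mul _)

lemma summable_div_add_of_tendsto_sq_mul (x : ℝ) :
    Summable fun k : ℕ => Ψ (k + 3) / (x + k + 3) := by
  have hv : Tendsto (fun k : ℕ => (x + k)⁻¹) atTop (𝓝 0) :=
    (tendsto_atTop_add_const_left _ x tendsto_natCast_atTop_atTop).inv_tendsto_atTop
  refine ((summable_nat_add_iff 3).2
    (summable_mul_of_tendsto_sq_mul hlim (hv.isBigO_one ℝ))).congr fun k => ?_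
  push_cast
  ring_nf

lemma tendsto_add_mul_add_mul_of_tendsto_sq_mul (a a' : ℝ) (k : ℕ) :
    Tendsto (fun N : ℕ => ((N : ℝ) + a) * (N + a') * Ψ (N + k)) atTop (𝓝 L) := by
  have hq : Tendsto (fun N : ℕ => ((N : ℝ) + k) ^ 2 * Ψ (N + k)) atTop (𝓝 L) := by
    simpa [Function.comp_def] using hlim.comp (tendsto_add_atTop_nat k)
  have h := ((tendsto_natCast_add_div_natCast_add a k).mul
    (tendsto_natCast_add_div_natCast_add a' k)).mul hq
  rw [one_mul, one_mul] at h
  refine h.congr' ?_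
  filter_upwards [eventually_gt_atTop 0] with N hN
  have : (N : ℝ) + k ≠ 0 := by positivity
  field_simp

lemma tendsto_add_mul_of_tendsto_sq_mul (a : ℝ) (k : ℕ) :
    Tendsto (fun N : ℕ => ((N : ℝ) + a) * Ψ (N + k)) atTop (𝓝 0) := by
  have h := (tendsto_add_mul_add_mul_of_tendsto_sq_mul hlim a k k).mul
    (tendsto_atTop_add_const_right _ (k : ℝ) tendsto_natCast_atTop_atTop).inv_tendsto_atTop
  rw [mul_zero] at h
  refine h.congr' ?_
  filter_upwards [eventually_gt_atTop 0] with N hN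
  have : (N : ℝ) + k ≠ 0 := by positivity
  simp only [Pi.inv_apply]
  field_simp

lemma tendsto_boundary_of_tendsto_sq_mul (b c : ℝ) {u : ℕ → ℝ} {l : ℝ}
    (hu : Tendsto (fun j : ℕ => u j / j) atTop (𝓝 l)) :
    Tendsto (fun N : ℕ => c * ((N : ℝ) + 5) * u (N + 2) * Ψ (N + 3)
        + b * ((N : ℝ) / (N + 2)) * u (N + 3) * Ψ (N + 2)) atTop (𝓝 (c * l * L)) := by
  have hu' (k : ℕ) : Tendsto (fun N : ℕ => u (N + k) / ((N : ℝ) + k)) atTop (𝓝 l) := by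
    simpa [Function.comp_def] using hu.comp (tendsto_add_atTop_nat k)
  have h := ((hu' 2).mul (tendsto_add_mul_add_mul_of_tendsto_sq_mul hlim 2 5 3)).const_mul c
    |>.add (((tendsto_natCast_div_add_atTop (2 : ℝ)).mul
      ((hu' 3).mul (tendsto_add_mul_of_tendsto_sq_mul hlim 3 2))).const_mul b)
  rw [show c * (l * L) + b * (1 * (l * 0)) = c * l * L by ring] at h
  refine h.congr fun N => ?_
  have : (N : ℝ) + 2 ≠ 0 := by positivity
  have : (N : ℝ) + 3 ≠ 0 := by positivity
  push_cast
  field_simp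

end Decay

def SolvesRecursion (b c : ℝ) (Ψ : ℕ → ℝ) : Prop :=
  ∀ n : ℕ, 3 ≤ n →
    c * ((n : ℝ) + 3) * Ψ (n + 1) + (b - c * ((n : ℝ) + 1)) * Ψ n
      - b * (((n : ℝ) - 3) / ((n : ℝ) - 1)) * Ψ (n - 1) = 0

-- Formal adjoint of the recursion: `∑ₙ uₙ (recursion at n) = ∑ₖ (recAdjoint u)ₖ Ψₖ`
-- for finitely supported `u`.
noncomputable def recAdjoint (b c : ℝ) (u : ℕ → ℝ) (k : ℕ) : ℝ :=
  c * ((k : ℝ) + 2) * u (k - 1) + (b - c * ((k : ℝ) + 1)) * u k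
    - b * (((k : ℝ) - 2) / k) * u (k + 1)

section Recursion

variable {b c : ℝ} {Ψ : ℕ → ℝ} {L : ℝ}

lemma sum_recAdjoint_mul (hrec : SolvesRecursion b c Ψ) (u : ℕ → ℝ) (N : ℕ) :
    ∑ k ∈ Finset.range N, recAdjoint b c u (k + 3) * Ψ (k + 3)
      = 5 * c * u 2 * Ψ 3 - (c * ((N : ℝ) + 5) * u (N + 2) * Ψ (N + 3)
          + b * ((N : ℝ) / (N + 2)) * u (N + 3) * Ψ (N + 2)) := by
  induction N with
  | zero => simp only [Finset.sum_range_zero, CharP.cast_eq_zero]; ring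
  | succ N ih =>
    have hN := hrec (N + 3) (by omega)
    simp only [show N + 3 + 1 = N + 4 from rfl, show N + 3 - 1 = N + 2 from rfl] at hN
    rw [Finset.sum_range_succ, ih, recAdjoint]
    simp only [show N + 3 - 1 = N + 2 from rfl, show N + 1 + 2 = N + 3 from rfl,
      show N + 1 + 3 = N + 4 from rfl]
    push_cast at hN ⊢
    linear_combination u (N + 3) * hN

lemma hasSum_recAdjoint_mul (hrec : SolvesRecursion b c Ψ)
    (hlim : Tendsto (fun n : ℕ => (n : ℝ) ^ 2 * Ψ n) atTop (𝓝 L))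
    {u : ℕ → ℝ} {l : ℝ} (hu : Tendsto (fun j : ℕ => u j / j) atTop (𝓝 l))
    (hs : Summable fun k => recAdjoint b c u (k + 3) * Ψ (k + 3)) :
    HasSum (fun k => recAdjoint b c u (k + 3) * Ψ (k + 3)) (5 * c * u 2 * Ψ 3 - c * l * L) := by
  have h := ((tendsto_boundary_of_tendsto_sq_mul hlim b c hu).const_sub (5 * c * u 2 * Ψ 3)).congr
    fun N => (sum_recAdjoint_mul hrec u N).symm
  rw [← tendsto_nhds_unique hs.hasSum.tendsto_sum_nat h]
  exact hs.hasSum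

end Recursion

section Operator

lemma hasSum_Lop' {b c d : ℝ} {F : ℕ → ℕ → ℝ} (hF : ∀ m, Summable fun k => F k m) (n : ℕ) :
    HasSum (fun k => Lop' b c d (F k) n) (Lop' b c d (fun m => ∑' k, F k m) n) :=
  (((hF _).hasSum.mul_left _).add ((hF _).hasSum.mul_left _)).sub ((hF _).hasSum.mul_left _)

lemma Lop'_sub_mul (b c d : ℝ) (f g : ℕ → ℝ) (s : ℝ) (n : ℕ) :
    Lop' b c d (fun m => f m - s * g m) n = Lop' b c d f n - s * Lop' b c d g n := by
  unfold Lop'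
  ring

lemma Lop'_one_div_add_two (b c : ℝ) {n : ℕ} (hn : 1 ≤ n) :
    Lop' b c 0 (fun m : ℕ => 1 / ((m : ℝ) + 2)) n = (c * (n + 5) - b) / ((n + 1) * (n + 2)) := by
  have hn' : (1 : ℝ) ≤ n := by exact_mod_cast hn
  have : (n : ℝ) + 1 ≠ 0 := by positivity
  have : (n : ℝ) + 2 ≠ 0 := by positivity
  have : (n : ℝ) + 3 ≠ 0 := by positivity
  have : (n : ℝ) - 1 + 2 ≠ 0 := by positivity
  unfold Lop'
  push_cast [Nat.cast_sub hn]
  field_simp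
  ring

lemma Lop'_div_add_eq_recAdjoint (b c x : ℝ) (k : ℕ) {n : ℕ} (hn : 1 ≤ n) :
    Lop' b c 0 (fun m : ℕ => x / ((m : ℝ) + k + 3)) n + 2 * b / (n + 1) * (x / (0 + k + 3))
      = recAdjoint b c (fun j : ℕ => 1 / ((j : ℝ) + n)) (k + 3) * x := by
  have hn' : (1 : ℝ) ≤ n := by exact_mod_cast hn
  have : (n : ℝ) + 1 ≠ 0 := by positivity
  have : (k : ℝ) + 3 ≠ 0 := by positivity
  have : (n : ℝ) - 1 + k + 3 ≠ 0 := by positivity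
  have : (k : ℝ) + 2 + n ≠ 0 := by positivity
  have : (n : ℝ) + k + 3 ≠ 0 := by positivity
  have : (k : ℝ) + 3 + n ≠ 0 := by positivity
  have : (n : ℝ) + 1 + k + 3 ≠ 0 := by positivity
  have : (k : ℝ) + 3 + 1 + n ≠ 0 := by positivity
  unfold Lop' recAdjoint
  simp only [show k + 3 - 1 = k + 2 from rfl]
  push_cast [Nat.cast_sub hn]
  field_simp
  ring

lemma recAdjoint_one (b c : ℝ) {k : ℕ} (hk : k ≠ 0) :
    recAdjoint b c (fun _ => 1) k = c + 2 * b / k := by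
  have : (k : ℝ) ≠ 0 := by exact_mod_cast hk
  unfold recAdjoint
  field_simp
  ring

lemma recAdjoint_natCast (b c : ℝ) {k : ℕ} (hk : k ≠ 0) :
    recAdjoint b c (fun j => (j : ℝ)) k = b - 2 * c + 2 * b / k := by
  have : (k : ℝ) ≠ 0 := by exact_mod_cast hk
  unfold recAdjoint
  push_cast [Nat.cast_sub (Nat.one_le_iff_ne_zero.2 hk)]
  field_simp
  ring

end Operator

-- The paper's `Z`, at real arguments: `Zₙ = stieltjes Ψ n`.
noncomputable def stieltjes (Ψ : ℕ → ℝ) (x : ℝ) : ℝ := ∑' k : ℕ, Ψ (k + 3) / (x + k + 3)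

section Moments

variable {b c : ℝ} {Ψ : ℕ → ℝ} {L : ℝ} (hrec : SolvesRecursion b c Ψ)
  (hlim : Tendsto (fun n : ℕ => (n : ℝ) ^ 2 * Ψ n) atTop (𝓝 L))
include hrec hlim

lemma mul_tsum_add_mul_stieltjes_zero :
    c * ∑' k, Ψ (k + 3) + 2 * b * stieltjes Ψ 0 = 5 * c * Ψ 3 := by
  have hsum : HasSum (fun k => recAdjoint b c (fun _ => 1) (k + 3) * Ψ (k + 3))
      (c * ∑' k, Ψ (k + 3) + 2 * b * stieltjes Ψ 0) := by
    have hΨ := (summable_nat_add_iff 3).2 (summable_of_tendsto_sq_mul hlim)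
    have hZ := summable_div_add_of_tendsto_sq_mul hlim 0
    refine ((hΨ.hasSum.mul_left c).add (hZ.hasSum.mul_left (2 * b))).congr_fun fun k => ?_
    rw [recAdjoint_one b c (by omega)]
    push_cast
    ring
  have h := hasSum_recAdjoint_mul hrec hlim
    (tendsto_const_nhds.div_atTop tendsto_natCast_atTop_atTop) hsum.summable
  linear_combination hsum.unique h

lemma sub_mul_tsum_add_mul_stieltjes_zero :
    (b - 2 * c) * ∑' k, Ψ (k + 3) + 2 * b * stieltjes Ψ 0 = 10 * c * Ψ 3 - c * L := by
  have hsum : HasSum (fun k => recAdjoint b c (fun j => (j : ℝ)) (k + 3) * Ψ (k + 3))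
      ((b - 2 * c) * ∑' k, Ψ (k + 3) + 2 * b * stieltjes Ψ 0) := by
    have hΨ := (summable_nat_add_iff 3).2 (summable_of_tendsto_sq_mul hlim)
    have hZ := summable_div_add_of_tendsto_sq_mul hlim 0
    refine ((hΨ.hasSum.mul_left (b - 2 * c)).add (hZ.hasSum.mul_left (2 * b))).congr_fun
      fun k => ?_
    rw [recAdjoint_natCast b c (by omega)]
    push_cast
    ring
  have hu : Tendsto (fun j : ℕ => (j : ℝ) / j) atTop (𝓝 1) :=
    tendsto_const_nhds.congr' <| (eventually_ne_atTop 0).mono fun j hj =>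
      (div_self (Nat.cast_ne_zero.2 hj)).symm
  have h := hasSum_recAdjoint_mul hrec hlim hu hsum.summable
  linear_combination hsum.unique h

lemma Lop'_stieltjes_add_mul_stieltjes_zero {n : ℕ} (hn : 1 ≤ n) :
    Lop' b c 0 (fun m : ℕ => stieltjes Ψ m) n + 2 * b / (n + 1) * stieltjes Ψ 0
      = 5 * c * Ψ 3 / (n + 2) := by
  have hsum : HasSum (fun k => recAdjoint b c (fun j : ℕ => 1 / ((j : ℝ) + n)) (k + 3) * Ψ (k + 3))
      (Lop' b c 0 (fun m : ℕ => stieltjes Ψ m) n + 2 * b / (n + 1) * stieltjes Ψ 0) :=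
    ((hasSum_Lop' (F := fun k m => Ψ (k + 3) / ((m : ℝ) + k + 3))
      (fun m => summable_div_add_of_tendsto_sq_mul hlim m) n).add
      ((summable_div_add_of_tendsto_sq_mul hlim 0).hasSum.mul_left (2 * b / (n + 1)))).congr_fun
      fun k => (Lop'_div_add_eq_recAdjoint b c _ k hn).symm
  have hu : Tendsto (fun j : ℕ => 1 / ((j : ℝ) + n) / j) atTop (𝓝 0) :=
    (tendsto_const_nhds.div_atTop (tendsto_atTop_add_const_right _ _
      tendsto_natCast_atTop_atTop)).div_atTop tendsto_natCast_atTop_atTop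
  have h := hasSum_recAdjoint_mul hrec hlim hu hsum.summable
  rw [hsum.unique h]
  push_cast
  ring

end Moments

theorem stmt_11_general (b c : ℝ)
    (Ψ : ℕ → ℝ) (hΨ3 : Ψ 3 = 1)
    (hrec : ∀ n : ℕ, 3 ≤ n →
      c * ((n : ℝ) + 3) * Ψ (n + 1) + (b - c * ((n : ℝ) + 1)) * Ψ n
        - b * (((n : ℝ) - 3) / ((n : ℝ) - 1)) * Ψ (n - 1) = 0)
    (Ψinf : ℝ)
    (hlim : Filter.Tendsto (fun n : ℕ => (n : ℝ) ^ 2 * Ψ n) Filter.atTop (nhds Ψinf)) :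
    Summable (fun k : ℕ => Ψ (k + 3)) ∧
    (∀ n : ℕ, 3 ≤ n → Summable (fun k : ℕ => Ψ (k + 3) / ((n : ℝ) + (k : ℝ) + 3))) ∧
    ∀ n : ℕ, 3 ≤ n →
      Lop' b c 0
        (fun m : ℕ => (∑' k : ℕ, Ψ (k + 3) / ((m : ℝ) + (k : ℝ) + 3))
          - (∑' k : ℕ, Ψ (k + 3)) * (1 / ((m : ℝ) + 2))) n
        = c * Ψinf * (1 / ((n : ℝ) + 2) - 1 / ((n : ℝ) + 1)) := by
  refine ⟨(summable_nat_add_iff 3).2 (summable_of_tendsto_sq_mul hlim),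
    fun n _ => summable_div_add_of_tendsto_sq_mul hlim n, fun n hn => ?_⟩
  have hn1 : 1 ≤ n := by omega
  have e1 := mul_tsum_add_mul_stieltjes_zero hrec hlim
  have e2 := sub_mul_tsum_add_mul_stieltjes_zero hrec hlim
  have e3 := Lop'_stieltjes_add_mul_stieltjes_zero hrec hlim hn1
  rw [hΨ3] at e1 e2 e3
  change Lop' b c 0 (fun m : ℕ => stieltjes Ψ m - (∑' k, Ψ (k + 3)) * (1 / ((m : ℝ) + 2))) n = _
  rw [Lop'_sub_mul, Lop'_one_div_add_two b c hn1]
  have : (n : ℝ) + 1 ≠ 0 := by positivity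
  have : (n : ℝ) + 2 ≠ 0 := by positivity
  linear_combination (norm := skip) e3 - e1 / (n + 1) + (e2 - e1) / ((n + 1) * (n + 2))
  field_simp
  ring

/-- Claim 1(ii) for the isolation coefficient: if `Ψ_3 = 1`, `Ψ` satisfies the three-term
recursion and `(n² Ψ_n)` converges to `Ψ_∞`, then `Σ = Σ_{n ≥ 3} Ψ_n` converges,
`Z_n = Σ_{k ≥ 3} Ψ_k/(n+k)` converges for every `n ≥ 3`, and
`L'(Z − Σ e^{(2)}) = c Ψ_∞ (e^{(2)} − e^{(1)})`. -/
theorem stmt_11 (b c : ℝ) (hb : 0 < b) (hc : 0 < c)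
    (Ψ : ℕ → ℝ) (hΨ3 : Ψ 3 = 1)
    (hrec : ∀ n : ℕ, 3 ≤ n →
      c * ((n : ℝ) + 3) * Ψ (n + 1) + (b - c * ((n : ℝ) + 1)) * Ψ n
        - b * (((n : ℝ) - 3) / ((n : ℝ) - 1)) * Ψ (n - 1) = 0)
    (Ψinf : ℝ)
    (hlim : Filter.Tendsto (fun n : ℕ => (n : ℝ) ^ 2 * Ψ n) Filter.atTop (nhds Ψinf)) :
    Summable (fun k : ℕ => Ψ (k + 3)) ∧
    (∀ n : ℕ, 3 ≤ n → Summable (fun k : ℕ => Ψ (k + 3) / ((n : ℝ) + (k : ℝ) + 3))) ∧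
    ∀ n : ℕ, 3 ≤ n →
      Lop' b c 0
        (fun m : ℕ => (∑' k : ℕ, Ψ (k + 3) / ((m : ℝ) + (k : ℝ) + 3))
          - (∑' k : ℕ, Ψ (k + 3)) * (1 / ((m : ℝ) + 2))) n
        = c * Ψinf * (1 / ((n : ℝ) + 2) - 1 / ((n : ℝ) + 1)) :=
  stmt_11_general b c Ψ hΨ3 hrec Ψinf hlim
end

section
/- For every real θ > 0, Σ_{n=1}^∞ n θ^{n−1} / ((n+2)(n+1)(n−1)!) = (e^θ(θ² − 3θ + 4) − θ − 4)/θ³. (Equivalently, with b = cθ, the fertility adaptive slope satisfies a_λ = Σ_{n≥1} n θ^{n−1}/(2c(n+2)(n+1)(n−1)!) = (e^θ(θ² − 3θ + 4) − θ − 4)/(2bθ²).) -/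
/-- The fertility adaptive slope series:
`Σ_{n ≥ 1} n θ^{n−1}/((n+2)(n+1)(n−1)!) = (e^θ(θ² − 3θ + 4) − θ − 4)/θ³` (series
reindexed by `n = m + 1`). -/
theorem stmt_14 (θ : ℝ) (hθ : 0 < θ) :
    (∑' m : ℕ, ((m : ℝ) + 1) * θ ^ m / ((((m : ℝ) + 3) * ((m : ℝ) + 2)) * (Nat.factorial m : ℝ)))
      = (Real.exp θ * (θ ^ 2 - 3 * θ + 4) - θ - 4) / θ ^ 3 := by
  have hsum : Summable (fun n : ℕ => θ ^ n / n.factorial) :=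
    Real.summable_pow_div_factorial θ
  have hexp : Real.exp θ = ∑' n : ℕ, θ ^ n / n.factorial := by
    rw [Real.exp_eq_exp_ℝ, NormedSpace.exp_eq_tsum_div]
  -- summability of shifted series
  have hshift : ∀ i : ℕ, Summable (fun m : ℕ => θ ^ m / ((m + i).factorial : ℝ)) := by
    intro i
    apply Summable.of_nonneg_of_le (fun m => by positivity) (fun m => ?_) hsum
    exact div_le_div_of_nonneg_left (by positivity) (by exact_mod_cast m.factorial_pos)
      (by exact_mod_cast Nat.factorial_le (Nat.le_add_right m i))
  -- tail sums
  have htail : ∀ i : ℕ, (∑' m : ℕ, θ ^ m / ((m + i).factorial : ℝ))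
      = (Real.exp θ - ∑ j ∈ Finset.range i, θ ^ j / j.factorial) / θ ^ i := by
    intro i
    rw [eq_div_iff (pow_ne_zero i hθ.ne')]
    have h := Summable.sum_add_tsum_nat_add i hsum
    rw [← hexp] at h
    have h2 : (∑' m : ℕ, θ ^ m / ((m + i).factorial : ℝ)) * θ ^ i
        = ∑' m : ℕ, θ ^ (m + i) / ((m + i).factorial : ℝ) := by
      rw [← tsum_mul_right]
      congr 1; funext m
      rw [div_mul_eq_mul_div, ← pow_add]
    rw [h2]
    linarith
  -- termwise decomposition
  have hterm : ∀ m : ℕ, ((m : ℝ) + 1) * θ ^ m / ((((m : ℝ) + 3) * ((m : ℝ) + 2)) * (Nat.factorial m : ℝ))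
      = θ ^ m / ((m + 1).factorial : ℝ) - 3 * (θ ^ m / ((m + 2).factorial : ℝ))
        + 4 * (θ ^ m / ((m + 3).factorial : ℝ)) := by
    intro m
    have hf : (0 : ℝ) < m.factorial := by exact_mod_cast m.factorial_pos
    have h1 : ((m + 1).factorial : ℝ) = ((m : ℝ) + 1) * m.factorial := by
      rw [Nat.factorial_succ]; push_cast; ring
    have h2 : ((m + 2).factorial : ℝ) = ((m : ℝ) + 2) * (((m : ℝ) + 1) * m.factorial) := by
      show (((m + 1) + 1).factorial : ℝ) = _
      rw [Nat.factorial_succ]; push_cast; rw [h1]; ring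
    have h3 : ((m + 3).factorial : ℝ) = ((m : ℝ) + 3) * (((m : ℝ) + 2) * (((m : ℝ) + 1) * m.factorial)) := by
      show (((m + 2) + 1).factorial : ℝ) = _
      rw [Nat.factorial_succ]; push_cast; rw [h2]; ring
    rw [h1, h2, h3]
    have hm1 : (0 : ℝ) < (m : ℝ) + 1 := by positivity
    have hm2 : (0 : ℝ) < (m : ℝ) + 2 := by positivity
    have hm3 : (0 : ℝ) < (m : ℝ) + 3 := by positivity
    field_simp
    ring
  rw [tsum_congr hterm]
  have s1 := hshift 1
  have s2 := hshift 2
  have s3 := hshift 3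
  rw [Summable.tsum_add (Summable.sub s1 (s2.mul_left 3)) (s3.mul_left 4),
      Summable.tsum_sub s1 (s2.mul_left 3), tsum_mul_left, tsum_mul_left,
      htail 1, htail 2, htail 3]
  simp [Finset.sum_range_succ, Nat.factorial]
  field_simp
  ring
end

section
/- Fix b, c > 0 and set θ = b/c. Let (φ_k)_{k ≥ 1} be a real sequence with φ_1 = 1/(2c) = θ/(2b), satisfying for all n ≥ 2 the recursion (n+2)φ_{n+1} + (θ − n − 1)φ_n − θ((n−2)/(n−1))φ_{n−1} = 0, and assume sup_k k|φ_k| < ∞ (so the power series below has radius of convergence at least 1). Then the function π(u) := Σ_{k ≥ 1} φ_k u^{k−1} is well defined and twice differentiable on [0,1) and solves there the ODE u²(1−u)π''(u) + u(θu(1−u) + 2 − 3u)π'(u) − 2π(u) + θ/b = 0. -/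
/-!
Since `k |φ_k|` is bounded, the coefficients of `π` and of its formal derivatives grow at most
polynomially, so on `(-1, 1)` the series may be differentiated termwise, twice. The ODE then holds
already for formal power series: for `m ≥ 2` the coefficient of `u^m` on its left-hand side is
`m - 1` times the recursion at `n = m`, that of `u` vanishes, and that of `1` is
`-2 φ_1 = -θ / b`. Evaluating at `u` is compatible with multiplication by polynomials, which
transports the formal identity to `π`.
-/

open PowerSeries
open scoped Polynomial

theorem summable_add_one_pow_mul_geometric (d : ℕ) {r : ℝ} (hr : |r| < 1) :
    Summable fun n : ℕ => ((n : ℝ) + 1) ^ d * r ^ n := by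
  have hpow (m : ℕ) : Summable fun n : ℕ => (n : ℝ) ^ m * r ^ n :=
    summable_pow_mul_geometric_of_norm_lt_one m hr
  refine (summable_sum (s := Finset.range (d + 1))
    (f := fun m (n : ℕ) => (d.choose m : ℝ) * ((n : ℝ) ^ m * r ^ n))
    fun m _ => (hpow m).mul_left _).congr fun n => ?_
  simp only [add_pow, one_pow, mul_one, Finset.sum_mul]
  exact Finset.sum_congr rfl fun m _ => by ring

section Evaluation

variable {f : ℝ⟦X⟧} {x s : ℝ}

theorem HasSum.coeff_X_pow_mul (h : HasSum (fun n => coeff n f * x ^ n) s) (k : ℕ) :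
    HasSum (fun n => coeff n (X ^ k * f) * x ^ n) (x ^ k * s) := by
  refine (hasSum_nat_add_iff' k).mp ?_
  have hlow : ∑ i ∈ Finset.range k, coeff i (X ^ k * f) * x ^ i = 0 :=
    Finset.sum_eq_zero fun i hi => by
      rw [coeff_X_pow_mul', if_neg (by simpa using hi), zero_mul]
  rw [hlow, sub_zero]
  simp only [PowerSeries.coeff_X_pow_mul]
  have hpow (n : ℕ) : coeff n f * x ^ (n + k) = x ^ k * (coeff n f * x ^ n) := by ring
  simpa only [hpow] using h.mul_left (x ^ k)

theorem HasSum.coeff_coe_mul (h : HasSum (fun n => coeff n f * x ^ n) s) (p : ℝ[X]) :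
    HasSum (fun n => coeff n ((p : ℝ⟦X⟧) * f) * x ^ n) (p.eval x * s) := by
  induction p using Polynomial.induction_on' with
  | add p q hp hq =>
    simpa only [Polynomial.coe_add, add_mul, map_add, Polynomial.eval_add] using hp.add hq
  | monomial k a =>
    simpa only [Polynomial.coe_monomial, monomial_eq_C_mul_X_pow, mul_assoc, coeff_C_mul,
      Polynomial.eval_monomial] using (h.coeff_X_pow_mul k).mul_left a

theorem PowerSeries.hasSum_coeff_C_mul_pow (a x : ℝ) :
    HasSum (fun n => coeff n (C a) * x ^ n) a := by
  simpa using hasSum_single (f := fun n => coeff n (C a) * x ^ n) 0 fun n hn => by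
    simp [coeff_C, hn]

end Evaluation

namespace PowerSeries

section PolynomialGrowth

variable {f : ℝ⟦X⟧} {K : ℝ} {m : ℕ}

theorem summable_coeff_mul_pow (hf : ∀ n, |coeff n f| ≤ K * ((n : ℝ) + 1) ^ m) {x : ℝ}
    (hx : |x| < 1) : Summable fun n => coeff n f * x ^ n := by
  refine .of_norm_bounded ((summable_add_one_pow_mul_geometric m (r := |x|)
    (by rwa [abs_abs])).mul_left K) fun n => ?_
  rw [norm_mul, norm_pow, Real.norm_eq_abs, Real.norm_eq_abs, ← mul_assoc]
  gcongr
  exact hf n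

theorem abs_coeff_derivative_le (hf : ∀ n, |coeff n f| ≤ K * ((n : ℝ) + 1) ^ m) (n : ℕ) :
    |coeff n (d⁄dX ℝ f)| ≤ 2 ^ m * K * ((n : ℝ) + 1) ^ (m + 1) := by
  have hK : 0 ≤ K := (abs_nonneg _).trans (by simpa using hf 0)
  have hn : (0 : ℝ) ≤ n := n.cast_nonneg
  rw [coeff_derivative, abs_mul, abs_of_nonneg (by positivity : (0 : ℝ) ≤ n + 1)]
  calc |coeff (n + 1) f| * (n + 1) ≤ K * ((n : ℝ) + 1 + 1) ^ m * (n + 1) := by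
        gcongr
        exact_mod_cast hf (n + 1)
    _ ≤ K * (2 * ((n : ℝ) + 1)) ^ m * (n + 1) := by gcongr; linarith
    _ = 2 ^ m * K * ((n : ℝ) + 1) ^ (m + 1) := by rw [mul_pow, pow_succ]; ring

theorem hasDerivAt_tsum_coeff_mul_pow (hf : ∀ n, |coeff n f| ≤ K * ((n : ℝ) + 1) ^ m) {x : ℝ}
    (hx : |x| < 1) :
    HasDerivAt (fun y => ∑' n, coeff n f * y ^ n) (∑' n, coeff n (d⁄dX ℝ f) * x ^ n) x := by
  obtain ⟨r, hxr, hr⟩ := exists_between hx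
  have hr0 : 0 < r := (abs_nonneg x).trans_lt hxr
  have hderiv (n : ℕ) (y : ℝ) :
      HasDerivAt (fun y => coeff (n + 1) f * y ^ (n + 1)) (coeff n (d⁄dX ℝ f) * y ^ n) y := by
    refine ((hasDerivAt_pow (n + 1) y).const_mul (coeff (n + 1) f)).congr_deriv ?_
    rw [coeff_derivative]
    push_cast
    ring
  have hbound (n : ℕ) (y : ℝ) (hy : y ∈ Metric.ball (0 : ℝ) r) :
      ‖coeff n (d⁄dX ℝ f) * y ^ n‖ ≤ 2 ^ m * K * (((n : ℝ) + 1) ^ (m + 1) * r ^ n) := by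
    rw [mem_ball_zero_iff] at hy
    have hcoeff := abs_coeff_derivative_le hf n
    rw [norm_mul, norm_pow, Real.norm_eq_abs, ← mul_assoc]
    exact mul_le_mul hcoeff (pow_le_pow_left₀ (norm_nonneg y) hy.le n) (by positivity)
      ((abs_nonneg _).trans hcoeff)
  -- Splitting off the constant term makes every summand differentiable without `n - 1`.
  have hshift : HasDerivAt (fun y => coeff 0 f + ∑' n, coeff (n + 1) f * y ^ (n + 1))
      (∑' n, coeff n (d⁄dX ℝ f) * x ^ n) x :=
    (hasDerivAt_tsum_of_isPreconnected
      ((summable_add_one_pow_mul_geometric (m + 1) (by rwa [abs_of_pos hr0])).mul_left (2 ^ m * K))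
      Metric.isOpen_ball (convex_ball 0 r).isPreconnected (fun n y _ => hderiv n y) hbound
      (Metric.mem_ball_self hr0) (by simp) (mem_ball_zero_iff.mpr hxr)).const_add _
  refine hshift.congr_of_eventuallyEq ?_
  filter_upwards [continuous_abs.continuousAt.eventually_lt continuousAt_const hx] with y hy
  simpa using (summable_coeff_mul_pow hf hy).tsum_eq_zero_add

theorem hasDerivAt_deriv_tsum_coeff_mul_pow (hf : ∀ n, |coeff n f| ≤ K * ((n : ℝ) + 1) ^ m)
    {x : ℝ} (hx : |x| < 1) :
    HasDerivAt (deriv fun y => ∑' n, coeff n f * y ^ n)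
      (∑' n, coeff n (d⁄dX ℝ (d⁄dX ℝ f)) * x ^ n) x := by
  refine (hasDerivAt_tsum_coeff_mul_pow (abs_coeff_derivative_le hf) hx).congr_of_eventuallyEq ?_
  filter_upwards [continuous_abs.continuousAt.eventually_lt continuousAt_const hx] with y hy
  exact (hasDerivAt_tsum_coeff_mul_pow hf hy).deriv

theorem tsum_linear_ode_of_eq_C (hf : ∀ n, |coeff n f| ≤ K * ((n : ℝ) + 1) ^ m) {x : ℝ}
    (hx : |x| < 1) {p q : ℝ[X]} {a b : ℝ}
    (hode : (p : ℝ⟦X⟧) * d⁄dX ℝ (d⁄dX ℝ f) + (q : ℝ⟦X⟧) * d⁄dX ℝ f - C a * f = C b) :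
    p.eval x * ∑' n, coeff n (d⁄dX ℝ (d⁄dX ℝ f)) * x ^ n
      + q.eval x * ∑' n, coeff n (d⁄dX ℝ f) * x ^ n - a * ∑' n, coeff n f * x ^ n = b := by
  have hf' := abs_coeff_derivative_le hf
  have h0 := (summable_coeff_mul_pow hf hx).hasSum
  have h1 := (summable_coeff_mul_pow hf' hx).hasSum
  have h2 := (summable_coeff_mul_pow (abs_coeff_derivative_le hf') hx).hasSum
  have hsum := hasSum_coeff_C_mul_pow b x
  rw [← hode] at hsum
  simp only [map_add, map_sub, add_mul, sub_mul, coeff_C_mul, mul_assoc] at hsum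
  exact (((h2.coeff_coe_mul p).add (h1.coeff_coe_mul q)).sub (h0.mul_left a)).unique hsum

end PolynomialGrowth

theorem ode_of_recurrence {θ : ℝ} {φ : ℕ → ℝ}
    (hrec : ∀ n : ℕ, 2 ≤ n →
      ((n : ℝ) + 2) * φ (n + 1) + (θ - (n : ℝ) - 1) * φ n
        - θ * (((n : ℝ) - 2) / ((n : ℝ) - 1)) * φ (n - 1) = 0)
    {F : ℝ⟦X⟧} (hF : ∀ k, coeff k F = φ (k + 1)) :
    ((Polynomial.X ^ 2 * (1 - Polynomial.X) : ℝ[X]) : ℝ⟦X⟧) * d⁄dX ℝ (d⁄dX ℝ F)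
      + ((Polynomial.X * (Polynomial.C θ * Polynomial.X * (1 - Polynomial.X) + 2
          - 3 * Polynomial.X) : ℝ[X]) : ℝ⟦X⟧) * d⁄dX ℝ F
      - C 2 * F = C (-2 * φ 1) := by
  have hnum (m : ℕ) [m.AtLeastTwo] : ((OfNat.ofNat m : ℝ[X]) : ℝ⟦X⟧) = OfNat.ofNat m :=
    map_ofNat Polynomial.coeToPowerSeries.ringHom m
  have hP2 : ((Polynomial.X ^ 2 * (1 - Polynomial.X) : ℝ[X]) : ℝ⟦X⟧) = X ^ 2 - X ^ 3 := by
    push_cast; ring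
  have hP1 : ((Polynomial.X * (Polynomial.C θ * Polynomial.X * (1 - Polynomial.X) + 2
      - 3 * Polynomial.X) : ℝ[X]) : ℝ⟦X⟧) = C 2 * X ^ 1 + C (θ - 3) * X ^ 2 - C θ * X ^ 3 := by
    push_cast
    simp only [hnum, map_sub, map_ofNat]
    ring
  rw [hP1, hP2]
  ext n
  simp only [sub_mul, add_mul, mul_assoc, map_sub, map_add, coeff_C_mul, coeff_X_pow_mul',
    coeff_derivative, hF, coeff_C]
  rcases n with _ | _ | _ | n
  · simp
  · simp
  · have h := hrec 2 le_rfl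
    norm_num at h ⊢
    linear_combination h
  · have h := hrec (n + 3) (by omega)
    have hn : (n : ℝ) + 2 ≠ 0 := by positivity
    rw [show n + 3 - 1 = n + 2 from rfl] at h
    push_cast at h
    rw [show (n : ℝ) + 3 - 2 = n + 1 by ring, show (n : ℝ) + 3 - 1 = n + 2 by ring] at h
    field_simp at h
    simp only [Nat.add_sub_cancel, le_add_iff_nonneg_left, zero_le, if_true]
    push_cast
    linear_combination h

end PowerSeries

theorem stmt_17_general (b c : ℝ) (hb : 0 < b) (θ : ℝ) (hθ : θ = b / c)
    (φ : ℕ → ℝ) (hφ1 : φ 1 = 1 / (2 * c))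
    (hrec : ∀ n : ℕ, 2 ≤ n →
      ((n : ℝ) + 2) * φ (n + 1) + (θ - (n : ℝ) - 1) * φ n
        - θ * (((n : ℝ) - 2) / ((n : ℝ) - 1)) * φ (n - 1) = 0)
    (hbdd : ∃ C : ℝ, ∀ k : ℕ, 1 ≤ k → (k : ℝ) * |φ k| ≤ C) :
    (∀ u ∈ Set.Ico (0 : ℝ) 1, Summable (fun k : ℕ => φ (k + 1) * u ^ k)) ∧
    ∀ u ∈ Set.Ico (0 : ℝ) 1,
      DifferentiableAt ℝ (fun v : ℝ => ∑' k : ℕ, φ (k + 1) * v ^ k) u ∧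
      DifferentiableAt ℝ (deriv (fun v : ℝ => ∑' k : ℕ, φ (k + 1) * v ^ k)) u ∧
      u ^ 2 * (1 - u) * deriv (deriv (fun v : ℝ => ∑' k : ℕ, φ (k + 1) * v ^ k)) u
        + u * (θ * u * (1 - u) + 2 - 3 * u)
            * deriv (fun v : ℝ => ∑' k : ℕ, φ (k + 1) * v ^ k) u
        - 2 * (∑' k : ℕ, φ (k + 1) * u ^ k) + θ / b = 0 := by
  obtain ⟨K, hK⟩ := hbdd
  set F : ℝ⟦X⟧ := mk fun k => φ (k + 1)
  have hF (k : ℕ) : coeff k F = φ (k + 1) := coeff_mk _ _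
  have hFbound (n : ℕ) : |coeff n F| ≤ K * ((n : ℝ) + 1) ^ 0 := by
    have h := hK (n + 1) (by omega)
    push_cast at h
    rw [hF, pow_zero, mul_one]
    exact (le_mul_of_one_le_left (abs_nonneg _) (by linarith [n.cast_nonneg (α := ℝ)])).trans h
  have hu1 {u : ℝ} (hu : u ∈ Set.Ico (0 : ℝ) 1) : |u| < 1 := by
    rw [abs_of_nonneg hu.1]; exact hu.2
  refine ⟨fun u hu => by simpa [hF] using summable_coeff_mul_pow hFbound (hu1 hu), fun u hu => ?_⟩
  have hu' := hu1 hu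
  have h1 := hasDerivAt_tsum_coeff_mul_pow hFbound hu'
  have h2 := hasDerivAt_deriv_tsum_coeff_mul_pow hFbound hu'
  simp only [hF] at h1 h2
  refine ⟨h1.differentiableAt, h2.differentiableAt, ?_⟩
  rw [h2.deriv, h1.deriv]
  have heval := tsum_linear_ode_of_eq_C hFbound hu' (ode_of_recurrence hrec hF)
  simp only [hF, Polynomial.eval_mul, Polynomial.eval_pow, Polynomial.eval_X, Polynomial.eval_sub,
    Polynomial.eval_one, Polynomial.eval_add, Polynomial.eval_C, Polynomial.eval_ofNat] at heval
  have hθb : θ / b = 2 * φ 1 := by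
    rw [hθ, hφ1, div_div_cancel_left' hb.ne']
    ring
  linear_combination heval + hθb

/-- The generating function `π(u) = Σ_{k ≥ 1} φ_k u^{k−1}` of the defence coefficients is
well defined and twice differentiable on `[0,1)` and solves there the ODE
`u²(1−u)π'' + u(θu(1−u) + 2 − 3u)π' − 2π + θ/b = 0`. -/
theorem stmt_17 (b c : ℝ) (hb : 0 < b) (hc : 0 < c) (θ : ℝ) (hθ : θ = b / c)
    (φ : ℕ → ℝ) (hφ1 : φ 1 = 1 / (2 * c))
    (hrec : ∀ n : ℕ, 2 ≤ n →
      ((n : ℝ) + 2) * φ (n + 1) + (θ - (n : ℝ) - 1) * φ n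
        - θ * (((n : ℝ) - 2) / ((n : ℝ) - 1)) * φ (n - 1) = 0)
    (hbdd : ∃ C : ℝ, ∀ k : ℕ, 1 ≤ k → (k : ℝ) * |φ k| ≤ C) :
    (∀ u ∈ Set.Ico (0 : ℝ) 1, Summable (fun k : ℕ => φ (k + 1) * u ^ k)) ∧
    ∀ u ∈ Set.Ico (0 : ℝ) 1,
      DifferentiableAt ℝ (fun v : ℝ => ∑' k : ℕ, φ (k + 1) * v ^ k) u ∧
      DifferentiableAt ℝ (deriv (fun v : ℝ => ∑' k : ℕ, φ (k + 1) * v ^ k)) u ∧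
      u ^ 2 * (1 - u) * deriv (deriv (fun v : ℝ => ∑' k : ℕ, φ (k + 1) * v ^ k)) u
        + u * (θ * u * (1 - u) + 2 - 3 * u)
            * deriv (fun v : ℝ => ∑' k : ℕ, φ (k + 1) * v ^ k) u
        - 2 * (∑' k : ℕ, φ (k + 1) * u ^ k) + θ / b = 0 :=
  stmt_17_general b c hb θ hθ φ hφ1 hrec hbdd
end

section
/- Let (ρ_k)_{k ≥ 2} be a real sequence and L ∈ ℝ be such that sup_{k ≥ 2} k|ρ_k − L| < ∞. Then for every integer n ≥ 1 the series Σ_{k ≥ 2} ρ_k (1/k − 1/(n+k)) converges, and there is a constant C such that for all n ≥ 2, | Σ_{k ≥ 2} ρ_k (1/k − 1/(n+k)) − L ln n | ≤ C. (Applied with ρ_k = kΦ_k, this gives n·Σ_{k≥2} Φ_k/(n+k) = Φ_∞ ln n + O(1), the key step in the logarithmic asymptotics of the defence invasibility coefficient.) -/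
open Finset Filter Topology

private lemma stmt19_base_summable : Summable (fun k : ℕ => 1 / ((k : ℝ) + 2) ^ 2) := by
  have := (summable_nat_add_iff (f := fun n : ℕ => 1 / (n : ℝ) ^ 2) 2).2
    (Real.summable_one_div_nat_pow.2 one_lt_two)
  refine this.congr fun k => ?_
  push_cast
  ring_nf

private lemma stmt19_g_nonneg (n k : ℕ) :
    0 ≤ 1 / ((k : ℝ) + 2) - 1 / ((n : ℝ) + (k : ℝ) + 2) := by
  have h1 : (0:ℝ) < (k:ℝ) + 2 := by positivity
  have h2 : ((k:ℝ) + 2) ≤ (n:ℝ) + (k:ℝ) + 2 := by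
    have : (0:ℝ) ≤ n := Nat.cast_nonneg n
    linarith
  have := one_div_le_one_div_of_le h1 h2
  linarith

private lemma stmt19_g_le (n k : ℕ) : 1 / ((k : ℝ) + 2) - 1 / ((n : ℝ) + (k : ℝ) + 2) ≤
    (n : ℝ) * (1 / ((k : ℝ) + 2) ^ 2) := by
  have h1 : (0:ℝ) < (k:ℝ) + 2 := by positivity
  have h2 : (0:ℝ) < (n:ℝ) + (k:ℝ) + 2 := by positivity
  rw [div_sub_div _ _ (ne_of_gt h1) (ne_of_gt h2), div_le_iff₀ (by positivity)]
  have hn : (0:ℝ) ≤ n := Nat.cast_nonneg n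
  have key : ((k:ℝ)+2)^2 ≤ ((k:ℝ)+2) * ((n:ℝ)+(k:ℝ)+2) := by nlinarith
  have : (n:ℝ) * (1 / ((k:ℝ)+2)^2) * (((k:ℝ)+2) * ((n:ℝ)+(k:ℝ)+2)) =
      (n:ℝ) * (((k:ℝ)+2) * ((n:ℝ)+(k:ℝ)+2)) / ((k:ℝ)+2)^2 := by ring
  rw [this, le_div_iff₀ (by positivity)]
  nlinarith

private lemma stmt19_g_le' (n k : ℕ) :
    1 / ((k : ℝ) + 2) - 1 / ((n : ℝ) + (k : ℝ) + 2) ≤ 1 / ((k : ℝ) + 2) := by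
  have h2 : (0:ℝ) < (n:ℝ) + (k:ℝ) + 2 := by positivity
  have : 0 ≤ 1 / ((n:ℝ)+(k:ℝ)+2) := by positivity
  linarith

private lemma stmt19_g_summable (n : ℕ) :
    Summable (fun k : ℕ => 1 / ((k : ℝ) + 2) - 1 / ((n : ℝ) + (k : ℝ) + 2)) :=
  Summable.of_nonneg_of_le (stmt19_g_nonneg n) (stmt19_g_le n)
    (stmt19_base_summable.mul_left (n : ℝ))

private lemma stmt19_tele_tsum (n : ℕ) :
    ∑' k : ℕ, (1 / ((k:ℝ)+2) - 1 / ((n:ℝ)+(k:ℝ)+2)) = ∑ k ∈ range n, 1 / ((k:ℝ)+2) := by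
  set f : ℕ → ℝ := fun k => 1 / ((k:ℝ)+2) with hf
  have hfun : ∀ k : ℕ, 1 / ((k:ℝ)+2) - 1 / ((n:ℝ)+(k:ℝ)+2) = f k - f (k + n) := by
    intro k; simp only [hf]; push_cast; ring_nf
  have hs' : Summable fun k : ℕ => f k - f (k + n) := (stmt19_g_summable n).congr hfun
  have h1 : Tendsto (fun K => ∑ k ∈ range K, (f k - f (k+n))) atTop
      (𝓝 (∑' k : ℕ, (f k - f (k+n)))) := hs'.hasSum.tendsto_sum_nat
  have hid : ∀ K, ∑ k ∈ range K, (f k - f (k+n)) =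
      ∑ k ∈ range n, f k - ∑ k ∈ range n, f (K + k) := by
    intro K
    have hA := Finset.sum_range_add f K n
    have hB := Finset.sum_range_add f n K
    rw [Nat.add_comm n K] at hB
    have hC : ∑ k ∈ range K, f (k + n) = ∑ k ∈ range K, f (n + k) := by
      refine Finset.sum_congr rfl fun k _ => by rw [Nat.add_comm]
    rw [Finset.sum_sub_distrib, hC]
    linarith
  have htail : Tendsto (fun K => ∑ k ∈ range n, f (K + k)) atTop (𝓝 0) := by
    have hterm : ∀ k ∈ range n, Tendsto (fun K => f (K + k)) atTop (𝓝 0) := by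
      intro k _
      have h2 : Tendsto (fun K : ℕ => ((K:ℝ) + (k:ℝ) + 2)) atTop atTop := by
        apply tendsto_atTop_add_const_right
        exact tendsto_atTop_add_const_right _ _ tendsto_natCast_atTop_atTop
      refine h2.inv_tendsto_atTop.congr fun K => ?_
      simp only [hf, Function.comp, one_div, Pi.inv_apply]
      push_cast
      ring_nf
    have := tendsto_finset_sum (range n) hterm
    simpa using this
  have h2 : Tendsto (fun K => ∑ k ∈ range K, (f k - f (k+n))) atTop
      (𝓝 (∑ k ∈ range n, f k - 0)) := by
    simp_rw [hid]
    exact (tendsto_const_nhds).sub htail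
  have heq := tendsto_nhds_unique h1 h2
  calc ∑' k : ℕ, (1 / ((k:ℝ)+2) - 1 / ((n:ℝ)+(k:ℝ)+2)) = ∑' k : ℕ, (f k - f (k+n)) :=
        tsum_congr hfun
    _ = ∑ k ∈ range n, f k := by rw [heq]; ring

private lemma stmt19_T_bounds (n : ℕ) (hn : 2 ≤ n) :
    |(∑ k ∈ range n, 1/((k:ℝ)+2)) - Real.log n| ≤ Real.log 2 := by
  have hupper : ∀ k : ℕ, 1/((k:ℝ)+2) ≤ Real.log ((k:ℝ)+2) - Real.log ((k:ℝ)+1) := by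
    intro k
    have := Real.log_le_sub_one_of_pos (x := ((k:ℝ)+1)/((k:ℝ)+2)) (by positivity)
    rw [Real.log_div (by positivity) (by positivity)] at this
    have hx : ((k:ℝ)+1)/((k:ℝ)+2) - 1 = -(1/((k:ℝ)+2)) := by field_simp; ring
    rw [hx] at this
    linarith
  have hlower : ∀ k : ℕ, Real.log ((k:ℝ)+3) - Real.log ((k:ℝ)+2) ≤ 1/((k:ℝ)+2) := by
    intro k
    have := Real.log_le_sub_one_of_pos (x := ((k:ℝ)+3)/((k:ℝ)+2)) (by positivity)
    rw [Real.log_div (by positivity) (by positivity)] at this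
    have hx : ((k:ℝ)+3)/((k:ℝ)+2) - 1 = 1/((k:ℝ)+2) := by field_simp; ring
    rw [hx] at this
    linarith
  have hTup : (∑ k ∈ range n, 1/((k:ℝ)+2)) ≤ Real.log ((n:ℝ)+1) := by
    calc (∑ k ∈ range n, 1/((k:ℝ)+2))
        ≤ ∑ k ∈ range n, (Real.log ((k:ℝ)+2) - Real.log ((k:ℝ)+1)) :=
          Finset.sum_le_sum fun k _ => hupper k
      _ = Real.log ((n:ℝ)+1) - Real.log ((0:ℕ)+1 : ℝ) := by
          have := Finset.sum_range_sub (fun k : ℕ => Real.log ((k:ℝ)+1)) n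
          rw [← this]
          refine Finset.sum_congr rfl fun k _ => ?_
          push_cast
          ring_nf
      _ = Real.log ((n:ℝ)+1) := by norm_num
  have hTlo : Real.log ((n:ℝ)+2) - Real.log 2 ≤ (∑ k ∈ range n, 1/((k:ℝ)+2)) := by
    calc Real.log ((n:ℝ)+2) - Real.log 2
        = Real.log ((n:ℝ)+2) - Real.log ((0:ℕ)+2 : ℝ) := by norm_num
      _ = ∑ k ∈ range n, (Real.log ((k:ℝ)+3) - Real.log ((k:ℝ)+2)) := by
          have := Finset.sum_range_sub (fun k : ℕ => Real.log ((k:ℝ)+2)) n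
          rw [← this]
          exact (Finset.sum_congr rfl fun k _ => by push_cast; ring_nf).symm
      _ ≤ ∑ k ∈ range n, 1/((k:ℝ)+2) := Finset.sum_le_sum fun k _ => hlower k
  have hn1 : (1:ℝ) ≤ n := by exact_mod_cast Nat.one_le_of_lt hn
  have hlogmono1 : Real.log ((n:ℝ)+1) ≤ Real.log 2 + Real.log n := by
    rw [← Real.log_mul (by norm_num) (by positivity)]
    exact Real.log_le_log (by positivity) (by linarith)
  have hlogmono2 : Real.log (n:ℝ) ≤ Real.log ((n:ℝ)+2) :=
    Real.log_le_log (by positivity) (by linarith)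
  rw [abs_le]
  constructor <;> linarith

/-- If `ρ_k → L` at rate `O(1/k)`, then `Σ_{k ≥ 2} ρ_k (1/k − 1/(n+k))` converges for every
`n ≥ 1` and equals `L ln n + O(1)` as `n → ∞`. -/
theorem stmt_19 (ρ : ℕ → ℝ) (L : ℝ)
    (h : ∃ C : ℝ, ∀ k : ℕ, 2 ≤ k → (k : ℝ) * |ρ k - L| ≤ C) :
    (∀ n : ℕ, 1 ≤ n →
      Summable (fun k : ℕ =>
        ρ (k + 2) * (1 / ((k : ℝ) + 2) - 1 / ((n : ℝ) + (k : ℝ) + 2)))) ∧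
    ∃ C : ℝ, ∀ n : ℕ, 2 ≤ n →
      |(∑' k : ℕ, ρ (k + 2) * (1 / ((k : ℝ) + 2) - 1 / ((n : ℝ) + (k : ℝ) + 2)))
          - L * Real.log (n : ℝ)| ≤ C := by
  obtain ⟨C, hC⟩ := h
  have hC0 : 0 ≤ C := le_trans (by positivity) (hC 2 le_rfl)
  -- bound on the deviation term
  have hdev : ∀ k : ℕ, |ρ (k+2) - L| ≤ C / ((k:ℝ)+2) := by
    intro k
    have := hC (k+2) (by omega)
    push_cast at this
    rw [le_div_iff₀ (by positivity)]
    linarith [this]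
  have hd_abs_le : ∀ (n k : ℕ),
      |(ρ (k+2) - L) * (1 / ((k : ℝ) + 2) - 1 / ((n : ℝ) + (k : ℝ) + 2))|
        ≤ C * (1 / ((k:ℝ)+2)^2) := by
    intro n k
    rw [abs_mul, abs_of_nonneg (stmt19_g_nonneg n k)]
    calc |ρ (k+2) - L| * (1 / ((k : ℝ) + 2) - 1 / ((n : ℝ) + (k : ℝ) + 2))
        ≤ (C / ((k:ℝ)+2)) * (1 / ((k:ℝ)+2)) := by
          apply mul_le_mul (hdev k) (stmt19_g_le' n k) (stmt19_g_nonneg n k)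
          positivity
      _ = C * (1 / ((k:ℝ)+2)^2) := by rw [mul_one_div, div_div, mul_one_div, sq]
  have hd_abs_sum : ∀ n : ℕ, Summable (fun k : ℕ =>
      |(ρ (k+2) - L) * (1 / ((k : ℝ) + 2) - 1 / ((n : ℝ) + (k : ℝ) + 2))|) := by
    intro n
    exact Summable.of_nonneg_of_le (fun k => abs_nonneg _) (hd_abs_le n)
      (stmt19_base_summable.mul_left C)
  have hd_sum : ∀ n : ℕ, Summable (fun k : ℕ =>
      (ρ (k+2) - L) * (1 / ((k : ℝ) + 2) - 1 / ((n : ℝ) + (k : ℝ) + 2))) :=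
    fun n => (hd_abs_sum n).of_abs
  have hsum : ∀ n : ℕ, Summable (fun k : ℕ =>
      ρ (k + 2) * (1 / ((k : ℝ) + 2) - 1 / ((n : ℝ) + (k : ℝ) + 2))) := by
    intro n
    have := ((stmt19_g_summable n).mul_left L).add (hd_sum n)
    refine this.congr fun k => ?_
    ring
  refine ⟨fun n _ => hsum n, ?_⟩
  set S : ℝ := ∑' k : ℕ, 1 / ((k:ℝ)+2)^2 with hS
  refine ⟨|L| * Real.log 2 + C * S, fun n hn => ?_⟩
  -- split the tsum
  have hsplit : (∑' k : ℕ, ρ (k + 2) * (1 / ((k : ℝ) + 2) - 1 / ((n : ℝ) + (k : ℝ) + 2)))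
      = L * (∑ k ∈ range n, 1/((k:ℝ)+2))
        + ∑' k : ℕ, (ρ (k+2) - L) * (1 / ((k : ℝ) + 2) - 1 / ((n : ℝ) + (k : ℝ) + 2)) := by
    have h1 : (∑' k : ℕ, ρ (k + 2) * (1 / ((k : ℝ) + 2) - 1 / ((n : ℝ) + (k : ℝ) + 2)))
        = ∑' k : ℕ, (L * (1 / ((k : ℝ) + 2) - 1 / ((n : ℝ) + (k : ℝ) + 2))
          + (ρ (k+2) - L) * (1 / ((k : ℝ) + 2) - 1 / ((n : ℝ) + (k : ℝ) + 2))) :=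
      tsum_congr fun k => by ring
    rw [h1, Summable.tsum_add ((stmt19_g_summable n).mul_left L) (hd_sum n), tsum_mul_left,
      stmt19_tele_tsum n]
  rw [hsplit]
  have hTb := stmt19_T_bounds n hn
  have hd_bound : |∑' k : ℕ, (ρ (k+2) - L) * (1 / ((k : ℝ) + 2) - 1 / ((n : ℝ) + (k : ℝ) + 2))|
      ≤ C * S := by
    calc |∑' k : ℕ, (ρ (k+2) - L) * (1 / ((k : ℝ) + 2) - 1 / ((n : ℝ) + (k : ℝ) + 2))|
        ≤ ∑' k : ℕ, |(ρ (k+2) - L) * (1 / ((k : ℝ) + 2) - 1 / ((n : ℝ) + (k : ℝ) + 2))| := by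
          have := norm_tsum_le_tsum_norm
            ((hd_abs_sum n).congr fun k => (Real.norm_eq_abs _).symm)
          simpa [Real.norm_eq_abs, abs_mul] using this
      _ ≤ ∑' k : ℕ, C * (1 / ((k:ℝ)+2)^2) :=
          Summable.tsum_le_tsum (hd_abs_le n) (hd_abs_sum n) (stmt19_base_summable.mul_left C)
      _ = C * S := tsum_mul_left
  calc |L * (∑ k ∈ range n, 1/((k:ℝ)+2))
          + (∑' k : ℕ, (ρ (k+2) - L) * (1 / ((k : ℝ) + 2) - 1 / ((n : ℝ) + (k : ℝ) + 2)))
          - L * Real.log n|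
      ≤ |L * ((∑ k ∈ range n, 1/((k:ℝ)+2)) - Real.log n)|
        + |∑' k : ℕ, (ρ (k+2) - L) * (1 / ((k : ℝ) + 2) - 1 / ((n : ℝ) + (k : ℝ) + 2))| := by
        have : L * (∑ k ∈ range n, 1/((k:ℝ)+2))
            + (∑' k : ℕ, (ρ (k+2) - L) * (1 / ((k : ℝ) + 2) - 1 / ((n : ℝ) + (k : ℝ) + 2)))
            - L * Real.log n
            = L * ((∑ k ∈ range n, 1/((k:ℝ)+2)) - Real.log n)
              + (∑' k : ℕ, (ρ (k+2) - L) * (1 / ((k : ℝ) + 2) - 1 / ((n : ℝ) + (k : ℝ) + 2))) := by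
          ring
        rw [this]
        exact abs_add_le _ _
    _ ≤ |L| * Real.log 2 + C * S := by
        rw [abs_mul]
        have := mul_le_mul_of_nonneg_left hTb (abs_nonneg L)
        linarith
end
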